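/- arXiv:1406.2681 — 7 statements merged into one kernel-verified Lean document; each statement's English description precedes it below -/
import Mathlib

section
/- Let E be a real Banach space, M ⊆ E an open set, 𝓗 a complex Hilbert space, and k : M → 𝓗 a smooth map whose image is total in 𝓗. Let σ : ℝ × M → M be a smooth action of (ℝ, +) on M (σ(0,m) = m and σ(t, σ(s,m)) = σ(t+s, m) for all t, s ∈ ℝ, m ∈ M), and assume the generating vector field is skew-symmetric for the kernel K(m,n) := ⟪k(n), k(m)⟫, i.e. for all m, n ∈ M: (d/dt)|_{t=0} K(σ(t,m), n) = −(d/dt)|_{t=0} K(m, σ(t,n)). Then: (a) K is invariant under the flow: ⟪k(σ(t,m)), k(σ(t,n))⟫ = ⟪k(m), k(n)⟫ for all t ∈ ℝ and m, n ∈ M; (b) there exists a unique strongly continuous one-parameter group (U_t)_{t∈ℝ} of unitary operators on 𝓗 such that U_t(k(m)) = k(σ(−t, m)) for all t ∈ ℝ and m ∈ M; (c) for each m ∈ M the orbit map t ↦ U_t(k(m)) is smooth from ℝ to 𝓗. -/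
open scoped InnerProductSpace

/-- Let `k : M → 𝓗` be a smooth map on an open subset `M` of a real Banach space with total
image in the complex Hilbert space `𝓗`, realizing the kernel `K(m, n) = ⟪k n, k m⟫`, and
let `σ : ℝ × M → M` be a smooth action of `(ℝ, +)` whose generating vector field is
`K`-skew-symmetric. Then (a) `K` is invariant under the flow; (b) there is a unique strongly
continuous one-parameter unitary group `(U t)` on `𝓗` with `U t (k m) = k (σ (-t) m)`;
(c) for each `m ∈ M` the orbit map `t ↦ k (σ (-t) m) (= U t (k m))` is smooth. -/
theorem unitary_one_parameter_group_of_skew_symmetric_flow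
    {E : Type*} [NormedAddCommGroup E] [NormedSpace ℝ E] [CompleteSpace E]
    {𝓗 : Type*} [NormedAddCommGroup 𝓗] [InnerProductSpace ℂ 𝓗] [CompleteSpace 𝓗]
    (M : Set E) (hM : IsOpen M)
    (k : E → 𝓗) (hk : ContDiffOn ℝ (⊤ : ℕ∞) k M)
    (htotal : Submodule.topologicalClosure (Submodule.span ℂ (k '' M)) = ⊤)
    (σ : ℝ → E → E)
    (hmaps : ∀ t : ℝ, ∀ m ∈ M, σ t m ∈ M)
    (hsmooth : ContDiffOn ℝ (⊤ : ℕ∞) (fun p : ℝ × E => σ p.1 p.2) (Set.univ ×ˢ M))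
    (hσzero : ∀ m ∈ M, σ 0 m = m)
    (hσadd : ∀ t s : ℝ, ∀ m ∈ M, σ t (σ s m) = σ (t + s) m)
    (hskew : ∀ m ∈ M, ∀ n ∈ M, ∃ a : ℂ,
      HasDerivAt (fun t => ⟪k n, k (σ t m)⟫_ℂ) a 0 ∧
      HasDerivAt (fun t => ⟪k (σ t n), k m⟫_ℂ) (-a) 0) :
    (∀ t : ℝ, ∀ m ∈ M, ∀ n ∈ M, ⟪k (σ t m), k (σ t n)⟫_ℂ = ⟪k m, k n⟫_ℂ) ∧
    (∃! U : ℝ → (𝓗 ≃ₗᵢ[ℂ] 𝓗),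
      (∀ v : 𝓗, U 0 v = v) ∧
      (∀ t s : ℝ, ∀ v : 𝓗, U t (U s v) = U (t + s) v) ∧
      (∀ v : 𝓗, Continuous fun t : ℝ => U t v) ∧
      (∀ t : ℝ, ∀ m ∈ M, U t (k m) = k (σ (-t) m))) ∧
    (∀ m ∈ M, ContDiff ℝ (⊤ : ℕ∞) fun t : ℝ => k (σ (-t) m)) := by
  classical
  -- density of the span
  have hdense : Dense ((Submodule.span ℂ (k '' M) : Submodule ℂ 𝓗) : Set 𝓗) :=
    Submodule.dense_iff_topologicalClosure_eq_top.mpr htotal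
  -- smoothness of orbits
  have horb : ∀ m ∈ M, ContDiff ℝ (⊤ : ℕ∞) fun t : ℝ => k (σ t m) := by
    intro m hm
    rw [contDiff_iff_contDiffAt]
    intro t
    have h1 : ContDiffAt ℝ (⊤ : ℕ∞) (fun p : ℝ × E => σ p.1 p.2) (t, m) :=
      hsmooth.contDiffAt (IsOpen.mem_nhds (isOpen_univ.prod hM) ⟨trivial, hm⟩)
    have h2 : ContDiffAt ℝ (⊤ : ℕ∞) (fun s : ℝ => σ s m) t :=
      h1.comp t (contDiffAt_id.prodMk contDiffAt_const)
    have h3 : ContDiffAt ℝ (⊤ : ℕ∞) k (σ t m) := hk.contDiffAt (hM.mem_nhds (hmaps t m hm))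
    exact h3.comp t h2
  -- part (a): invariance of the kernel
  have hinv : ∀ t : ℝ, ∀ m ∈ M, ∀ n ∈ M, ⟪k (σ t m), k (σ t n)⟫_ℂ = ⟪k m, k n⟫_ℂ := by
    intro t m hm n hn
    have hdf : ∀ u : ℝ, HasDerivAt (fun s : ℝ => ⟪k (σ s m), k (σ s n)⟫_ℂ) 0 u := by
      intro u
      set mt := σ u m with hmt_def
      set nt := σ u n with hnt_def
      have hmt : mt ∈ M := hmaps u m hm
      have hnt : nt ∈ M := hmaps u n hn
      have hv : HasDerivAt (fun s : ℝ => k (σ s mt)) (deriv (fun s : ℝ => k (σ s mt)) 0) 0 :=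
        (((horb mt hmt).differentiable (by simp)) 0).hasDerivAt
      have hw : HasDerivAt (fun s : ℝ => k (σ s nt)) (deriv (fun s : ℝ => k (σ s nt)) 0) 0 :=
        (((horb nt hnt).differentiable (by simp)) 0).hasDerivAt
      set v := deriv (fun s : ℝ => k (σ s mt)) 0
      set w := deriv (fun s : ℝ => k (σ s nt)) 0
      obtain ⟨a, ha1, ha2⟩ := hskew mt hmt nt hnt
      have hva : a = ⟪k nt, v⟫_ℂ := by
        have h := ha1.unique ((hasDerivAt_const (0 : ℝ) (k nt)).inner ℂ hv)
        simpa using h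
      have hwa : -a = ⟪w, k mt⟫_ℂ := by
        have h := ha2.unique (hw.inner ℂ (hasDerivAt_const (0 : ℝ) (k mt)))
        simpa using h
      have hsub : HasDerivAt (fun s : ℝ => s - u) 1 u := by
        simpa using (hasDerivAt_id u).sub_const u
      have h1 : HasDerivAt (fun s : ℝ => k (σ (s - u) mt)) v u := by
        simpa [Function.comp_def] using hv.scomp_of_eq u hsub (by simp)
      have h2 : HasDerivAt (fun s : ℝ => k (σ (s - u) nt)) w u := by
        simpa [Function.comp_def] using hw.scomp_of_eq u hsub (by simp)
      have h3 := h1.inner ℂ h2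
      have hfun : (fun s : ℝ => ⟪k (σ (s - u) mt), k (σ (s - u) nt)⟫_ℂ) =
          fun s : ℝ => ⟪k (σ s m), k (σ s n)⟫_ℂ := by
        funext s
        have hsu : s - u + u = s := by ring
        rw [hmt_def, hnt_def, hσadd (s - u) u m hm, hσadd (s - u) u n hn, hsu]
      have hval : ⟪k (σ (u - u) mt), w⟫_ℂ + ⟪v, k (σ (u - u) nt)⟫_ℂ = 0 := by
        rw [sub_self, hσzero mt hmt, hσzero nt hnt]
        have e1 : ⟪k mt, w⟫_ℂ = (starRingEnd ℂ) (-a) := by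
          rw [hwa, inner_conj_symm]
        have e2 : ⟪v, k nt⟫_ℂ = (starRingEnd ℂ) a := by
          rw [hva, inner_conj_symm]
        rw [e1, e2, map_neg, neg_add_cancel]
      have h4 : HasDerivAt (fun s : ℝ => ⟪k (σ s m), k (σ s n)⟫_ℂ)
          (⟪k (σ (u - u) mt), w⟫_ℂ + ⟪v, k (σ (u - u) nt)⟫_ℂ) u := by
        rw [← hfun]; exact h3
      rwa [hval] at h4
    have hconst := is_const_of_deriv_eq_zero (𝕜 := ℝ)
      (f := fun s : ℝ => ⟪k (σ s m), k (σ s n)⟫_ℂ)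
      (fun u => (hdf u).differentiableAt) (fun u => (hdf u).deriv) t 0
    calc ⟪k (σ t m), k (σ t n)⟫_ℂ = ⟪k (σ 0 m), k (σ 0 n)⟫_ℂ := hconst
      _ = ⟪k m, k n⟫_ℂ := by rw [hσzero m hm, hσzero n hn]
  -- part (c): smoothness of orbit maps
  have hc : ∀ m ∈ M, ContDiff ℝ (⊤ : ℕ∞) fun t : ℝ => k (σ (-t) m) := by
    intro m hm
    exact (horb m hm).comp contDiff_neg
  -- the contraction-free construction of the unitaries
  have key : ∀ t : ℝ, ∃ B : 𝓗 →L[ℂ] 𝓗,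
      (∀ m ∈ M, B (k m) = k (σ (-t) m)) ∧ (∀ v, ‖B v‖ = ‖v‖) := by
    intro t
    set P : (↥M →₀ ℂ) →ₗ[ℂ] 𝓗 :=
      Finsupp.linearCombination ℂ (fun m : ↥M => k m.1) with hP_def
    set Q : (↥M →₀ ℂ) →ₗ[ℂ] 𝓗 :=
      Finsupp.linearCombination ℂ (fun m : ↥M => k (σ (-t) m.1)) with hQ_def
    have hPQinner : ∀ f g : ↥M →₀ ℂ, ⟪Q f, Q g⟫_ℂ = ⟪P f, P g⟫_ℂ := by
      intro f g
      rw [hP_def, hQ_def]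
      simp only [Finsupp.linearCombination_apply, Finsupp.sum]
      rw [sum_inner, sum_inner]
      refine Finset.sum_congr rfl fun a _ => ?_
      rw [inner_sum, inner_sum]
      refine Finset.sum_congr rfl fun b _ => ?_
      rw [inner_smul_left, inner_smul_left, inner_smul_right, inner_smul_right,
        hinv (-t) a.1 a.2 b.1 b.2]
    have hPQnorm : ∀ f : ↥M →₀ ℂ, ‖Q f‖ = ‖P f‖ := by
      intro f
      rw [norm_eq_sqrt_re_inner (𝕜 := ℂ), norm_eq_sqrt_re_inner (𝕜 := ℂ), hPQinner]
    have hker : LinearMap.ker P ≤ LinearMap.ker Q := by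
      intro f hf
      rw [LinearMap.mem_ker] at hf ⊢
      have h := hPQnorm f
      rw [hf, norm_zero] at h
      exact norm_eq_zero.mp h
    set e := P.quotKerEquivRange with he_def
    set T : ↥(LinearMap.range P) →ₗ[ℂ] 𝓗 :=
      (Submodule.liftQ (LinearMap.ker P) Q hker).comp
        (e.symm : ↥(LinearMap.range P) →ₗ[ℂ] ((↥M →₀ ℂ) ⧸ LinearMap.ker P)) with hT_def
    have hT : ∀ (f : ↥M →₀ ℂ) (h : P f ∈ LinearMap.range P), T ⟨P f, h⟩ = Q f := by
      intro f h
      have h1 : e.symm ⟨P f, h⟩ = Submodule.Quotient.mk f := by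
        rw [LinearEquiv.symm_apply_eq]
        exact Subtype.ext (P.quotKerEquivRange_apply_mk f)
      rw [hT_def]
      simp only [LinearMap.comp_apply, LinearEquiv.coe_coe, h1, Submodule.liftQ_apply]
    have hTnorm : ∀ x : ↥(LinearMap.range P), ‖T x‖ = ‖x‖ := by
      rintro ⟨x, hx⟩
      obtain ⟨f, rfl⟩ := hx
      rw [hT f (LinearMap.mem_range_self P f), hPQnorm]
      rfl
    set Tiso : ↥(LinearMap.range P) →ₗᵢ[ℂ] 𝓗 := ⟨T, hTnorm⟩ with hTiso_def
    have hrangeP : LinearMap.range P = Submodule.span ℂ (k '' M) := by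
      rw [hP_def, Finsupp.range_linearCombination, ← Set.image_eq_range]
    have hdenseP : Dense ((LinearMap.range P : Submodule ℂ 𝓗) : Set 𝓗) := by
      rw [hrangeP]; exact hdense
    have hdr : DenseRange ((LinearMap.range P).subtypeL : ↥(LinearMap.range P) →L[ℂ] 𝓗) := by
      have h : Set.range ((LinearMap.range P).subtypeL : ↥(LinearMap.range P) →L[ℂ] 𝓗) =
          ((LinearMap.range P : Submodule ℂ 𝓗) : Set 𝓗) := Subtype.range_coe
      rw [DenseRange, h]; exact hdenseP
    have hui : IsUniformInducing ((LinearMap.range P).subtypeL : ↥(LinearMap.range P) →L[ℂ] 𝓗) :=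
      isometry_subtype_coe.isUniformInducing
    set B := Tiso.toContinuousLinearMap.extend (LinearMap.range P).subtypeL with hB_def
    have hBP : ∀ f : ↥M →₀ ℂ, B (P f) = Q f := by
      intro f
      have h := ContinuousLinearMap.extend_eq Tiso.toContinuousLinearMap
        hdr hui ⟨P f, LinearMap.mem_range_self P f⟩
      rw [hB_def]
      have h2 : ((LinearMap.range P).subtypeL ⟨P f, LinearMap.mem_range_self P f⟩ : 𝓗) = P f :=
        rfl
      rw [h2] at h
      rw [h, hTiso_def]
      simp only [LinearIsometry.coe_toContinuousLinearMap, LinearIsometry.coe_mk]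
      exact hT f (LinearMap.mem_range_self P f)
    refine ⟨B, ?_, ?_⟩
    · intro m hm
      have h1 : k m = P (Finsupp.single ⟨m, hm⟩ 1) := by
        rw [hP_def, Finsupp.linearCombination_single, one_smul]
      rw [h1, hBP, hQ_def, Finsupp.linearCombination_single, one_smul]
    · have heq : (fun v : 𝓗 => ‖B v‖) = fun v => ‖v‖ := by
        refine Continuous.ext_on hdenseP (continuous_norm.comp B.continuous) continuous_norm ?_
        intro x hx
        obtain ⟨f, rfl⟩ := hx
        show ‖B (P f)‖ = ‖P f‖
        rw [hBP, hPQnorm]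
      intro v
      exact congrFun heq v
  obtain ⟨B, hBk, hBnorm⟩ : ∃ B : ℝ → 𝓗 →L[ℂ] 𝓗,
      (∀ t : ℝ, ∀ m ∈ M, B t (k m) = k (σ (-t) m)) ∧ (∀ t v, ‖B t v‖ = ‖v‖) := by
    choose B h1 h2 using key
    exact ⟨B, h1, h2⟩
  -- extensionality from totality
  have hext : ∀ f g : 𝓗 →L[ℂ] 𝓗, (∀ m ∈ M, f (k m) = g (k m)) → f = g := by
    intro f g h
    refine ContinuousLinearMap.ext_on hdense ?_
    rintro x ⟨m, hm, rfl⟩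
    exact h m hm
  -- group law
  have hBcomp : ∀ t s : ℝ, (B t).comp (B s) = B (t + s) := by
    intro t s
    refine hext _ _ fun m hm => ?_
    rw [ContinuousLinearMap.comp_apply, hBk s m hm, hBk t _ (hmaps (-s) m hm),
      hBk (t + s) m hm, hσadd (-t) (-s) m hm, ← neg_add]
  have hB0 : B 0 = ContinuousLinearMap.id ℂ 𝓗 := by
    refine hext _ _ fun m hm => ?_
    rw [hBk 0 m hm, neg_zero, hσzero m hm]
    rfl
  have hBinv : ∀ (t : ℝ) (v : 𝓗), B t (B (-t) v) = v := by
    intro t v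
    have h := hBcomp t (-t)
    rw [add_neg_cancel, hB0] at h
    have h2 := congrArg (fun L : 𝓗 →L[ℂ] 𝓗 => L v) h
    simpa using h2
  have hsurj : ∀ t : ℝ, Function.Surjective (B t) := fun t v => ⟨B (-t) v, hBinv t v⟩
  -- build the unitary group
  obtain ⟨U, hU⟩ : ∃ U : ℝ → (𝓗 ≃ₗᵢ[ℂ] 𝓗), ∀ t v, U t v = B t v := by
    refine ⟨fun t => LinearIsometryEquiv.ofSurjective
      ⟨(B t : 𝓗 →ₗ[ℂ] 𝓗), hBnorm t⟩ (hsurj t), fun t v => ?_⟩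
    rw [LinearIsometryEquiv.coe_ofSurjective]
    rfl
  -- strong continuity
  have hcontS : ∀ v ∈ Submodule.span ℂ (k '' M), Continuous fun u : ℝ => B u v := by
    intro v hv
    induction hv using Submodule.span_induction with
    | mem x hx =>
      obtain ⟨m, hm, rfl⟩ := hx
      have h : (fun u : ℝ => B u (k m)) = fun u : ℝ => k (σ (-u) m) :=
        funext fun u => hBk u m hm
      rw [h]
      exact (hc m hm).continuous
    | zero => simpa using continuous_const
    | add x y hx hy ihx ihy => simp only [map_add]; exact ihx.add ihy
    | smul c x hx ih => simp only [map_smul]; exact ih.const_smul c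
  have hcont : ∀ v : 𝓗, Continuous fun u : ℝ => B u v := by
    intro v
    have hv : v ∈ closure ((Submodule.span ℂ (k '' M) : Submodule ℂ 𝓗) : Set 𝓗) := hdense v
    obtain ⟨w, hw, hwt⟩ := mem_closure_iff_seq_limit.mp hv
    have huni : TendstoUniformly (fun n (u : ℝ) => B u (w n)) (fun u => B u v) Filter.atTop := by
      rw [Metric.tendstoUniformly_iff]
      intro ε hε
      have hev : ∀ᶠ n in Filter.atTop, dist (w n) v < ε :=
        hwt (Metric.ball_mem_nhds v hε)
      filter_upwards [hev] with n hn u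
      rw [dist_eq_norm, ← map_sub, hBnorm, ← dist_eq_norm]
      rwa [dist_comm] at hn
    exact huni.continuous (Filter.Frequently.of_forall fun n => hcontS (w n) (hw n))
  refine ⟨hinv, ⟨U, ⟨fun v => ?_, fun t s v => ?_, fun v => ?_, fun t m hm => ?_⟩, ?_⟩, hc⟩
  · rw [hU 0 v, hB0]; rfl
  · rw [hU s v, hU t (B s v), hU (t + s) v]
    have h := congrArg (fun L : 𝓗 →L[ℂ] 𝓗 => L v) (hBcomp t s)
    simpa using h
  · simp only [hU]
    exact hcont v
  · rw [hU t (k m)]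
    exact hBk t m hm
  · rintro V ⟨hV0, hVgrp, hVcont, hVk⟩
    funext t
    refine LinearIsometryEquiv.ext fun v => ?_
    have h1 : (V t).toLinearIsometry.toContinuousLinearMap =
        (U t).toLinearIsometry.toContinuousLinearMap := by
      refine hext _ _ fun m hm => ?_
      simp only [LinearIsometry.coe_toContinuousLinearMap,
        LinearIsometryEquiv.coe_toLinearIsometry]
      rw [hVk t m hm, hU t (k m), hBk t m hm]
    have h2 := congrArg (fun L : 𝓗 →L[ℂ] 𝓗 => L v) h1
    simpa only [LinearIsometry.coe_toContinuousLinearMap,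
      LinearIsometryEquiv.coe_toLinearIsometry] using h2
end

section
/- (Existence and uniqueness of the maximal local flow.) Let M be a smooth manifold without boundary modeled on a real Banach space and let X be a smooth locally integrable vector field on M. For x ∈ M let γ_x : I_x → M denote the maximal integral curve of X with 0 ∈ I_x and γ_x(0) = x. Then the set 𝒟_X := {(t,x) ∈ ℝ × M : t ∈ I_x} is open in ℝ × M, the map Φ : 𝒟_X → M, Φ(t,x) := γ_x(t), is smooth, Φ is a local flow whose velocity field is X, and Φ is the unique local flow on 𝒟_X with velocity field X. -/
open scoped Manifold
open Set
open scoped Topology Pointwise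

/-- A smooth local flow on a manifold `M` modeled on a real Banach space `E`:
a smooth map `Φ` defined on an open set `D ⊆ ℝ × M` containing `{0} × M`, whose slices
`I_x = {t | (t, x) ∈ D}` are intervals containing `0`, with `Φ (0, x) = x` and
`Φ (t, Φ (s, x)) = Φ (s + t, x)` whenever all relevant points lie in `D`. -/
structure IsLocalFlow {E : Type*} [NormedAddCommGroup E] [NormedSpace ℝ E]
    {M : Type*} [TopologicalSpace M] [ChartedSpace E M]
    (Φ : ℝ × M → M) (D : Set (ℝ × M)) : Prop where
  isOpen_dom : IsOpen D
  zero_mem : ∀ x : M, (0, x) ∈ D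
  ordConnected_slice : ∀ x : M, Set.OrdConnected {t : ℝ | (t, x) ∈ D}
  smoothOn : ContMDiffOn ((𝓘(ℝ, ℝ)).prod 𝓘(ℝ, E)) 𝓘(ℝ, E) (⊤ : ℕ∞) Φ D
  map_zero : ∀ x : M, Φ (0, x) = x
  comp : ∀ (s t : ℝ) (x : M), (s, x) ∈ D → (t, Φ (s, x)) ∈ D → (s + t, x) ∈ D →
    Φ (t, Φ (s, x)) = Φ (s + t, x)

/-- `X` is the velocity field of the local flow `Φ`:
`X x = (d/dt)|₀ Φ (t, x)` for every `x`. -/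
def IsVelocityField {E : Type*} [NormedAddCommGroup E] [NormedSpace ℝ E]
    {M : Type*} [TopologicalSpace M] [ChartedSpace E M]
    (X : (x : M) → TangentSpace 𝓘(ℝ, E) x) (Φ : ℝ × M → M) : Prop :=
  ∀ x : M, HasMFDerivAt 𝓘(ℝ, ℝ) 𝓘(ℝ, E) (fun t => Φ (t, x)) 0
    ((1 : ℝ →L[ℝ] ℝ).smulRight (X x))

set_option linter.unusedSectionVars false

section Aux
variable {E : Type*} [NormedAddCommGroup E] [NormedSpace ℝ E] [CompleteSpace E]
  {M : Type*} [TopologicalSpace M] [ChartedSpace E M]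
  [IsManifold 𝓘(ℝ, E) (⊤ : ℕ∞) M]
  {X : (x : M) → TangentSpace 𝓘(ℝ, E) x}
  {Φ : ℝ × M → M} {D : Set (ℝ × M)}

lemma hasMFDerivAt_comp_sub {f : ℝ → M} {d} (hf : HasMFDerivAt 𝓘(ℝ, ℝ) 𝓘(ℝ, E) f 0 d)
    (t₀ : ℝ) : HasMFDerivAt 𝓘(ℝ, ℝ) 𝓘(ℝ, E) (fun t => f (t - t₀)) t₀ d := by
  have hf' : HasMFDerivAt 𝓘(ℝ, ℝ) 𝓘(ℝ, E) f (t₀ - t₀) d := by rw [sub_self]; exact hf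
  have h0 : HasMFDerivAt 𝓘(ℝ, ℝ) 𝓘(ℝ, E) (f ∘ (fun t : ℝ => t - t₀)) t₀
      (d.comp (ContinuousLinearMap.id ℝ ℝ)) := by
    apply HasMFDerivAt.comp (f := fun t : ℝ => t - t₀) t₀ hf'
    refine ⟨(continuous_sub_right _).continuousAt, ?_⟩
    simp only [mfld_simps, hasFDerivWithinAt_univ]
    simp only [chartAt_self_eq, mfld_simps, hasFDerivWithinAt_univ, Function.comp_def]
    exact ((hasFDerivAt_id (𝕜 := ℝ) t₀).sub_const t₀).hasFDerivWithinAt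
  exact h0

lemma IsLocalFlow.isIntegralCurveOn_slice (hΦ : IsLocalFlow (E := E) Φ D) (hV : IsVelocityField (E := E) X Φ)
    (x : M) : IsMIntegralCurveOn (I := 𝓘(ℝ, E)) (fun t => Φ (t, x)) X {t | (t, x) ∈ D} := by
  intro t₀ ht₀
  have hev : (fun u => Φ (u + t₀, x)) =ᶠ[𝓝 (0:ℝ)] (fun u => Φ (u, Φ (t₀, x))) := by
    have h1 : ∀ᶠ u in 𝓝 (0:ℝ), (t₀ + u, x) ∈ D := by
      have hc : ContinuousAt (fun u : ℝ => (t₀ + u, x)) 0 :=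
        ((continuous_add_left t₀).prodMk continuous_const).continuousAt
      exact hc (hΦ.isOpen_dom.mem_nhds (by simpa using ht₀))
    have h2 : ∀ᶠ u in 𝓝 (0:ℝ), (u, Φ (t₀, x)) ∈ D := by
      have hc : ContinuousAt (fun u : ℝ => (u, Φ (t₀, x))) 0 :=
        (continuous_id.prodMk continuous_const).continuousAt
      exact hc (hΦ.isOpen_dom.mem_nhds (hΦ.zero_mem _))
    filter_upwards [h1, h2] with u hu1 hu2
    rw [add_comm, hΦ.comp t₀ u x ht₀ hu2 hu1]
  have hd : HasMFDerivAt 𝓘(ℝ, ℝ) 𝓘(ℝ, E) (fun u => Φ (u + t₀, x)) 0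
      ((1 : ℝ →L[ℝ] ℝ).smulRight (X (Φ (t₀, x)))) :=
    (hV (Φ (t₀, x))).congr_of_eventuallyEq hev
  have h3 := hasMFDerivAt_comp_sub (M := M) hd t₀
  have hfun : (fun t => Φ (t - t₀ + t₀, x)) = (fun t => Φ (t, x)) := by
    funext t; rw [sub_add_cancel]
  rw [hfun] at h3
  exact h3.hasMFDerivWithinAt


lemma IsLocalFlow.isOpen_slice (hΦ : IsLocalFlow (E := E) Φ D) (x : M) :
    IsOpen {t : ℝ | (t, x) ∈ D} :=
  hΦ.isOpen_dom.preimage (continuous_id.prodMk continuous_const)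

lemma IsLocalFlow.isIntegralCurveAt_slice (hΦ : IsLocalFlow (E := E) Φ D)
    (hV : IsVelocityField (E := E) X Φ) {x : M} {t : ℝ} (ht : (t, x) ∈ D) :
    IsMIntegralCurveAt (I := 𝓘(ℝ, E)) (fun u => Φ (u, x)) X t :=
  (hΦ.isIntegralCurveOn_slice hV x).isMIntegralCurveAt ((hΦ.isOpen_slice x).mem_nhds ht)

lemma eventually_ne_of_ne (hΦ : IsLocalFlow (E := E) Φ D) (hV : IsVelocityField (E := E) X Φ)
    (hX : ContMDiff 𝓘(ℝ, E) (𝓘(ℝ, E)).tangent (⊤ : ℕ∞)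
      (fun x => (⟨x, X x⟩ : TangentBundle 𝓘(ℝ, E) M)))
    {α β : ℝ → M} {t : ℝ} (hα : IsMIntegralCurveAt (I := 𝓘(ℝ, E)) α X t)
    (hβ : IsMIntegralCurveAt (I := 𝓘(ℝ, E)) β X t) (hne : α t ≠ β t) :
    ∀ᶠ r in 𝓝 t, α r ≠ β r := by
  set y := α t with hy
  set z := β t with hz
  have hαt : IsMIntegralCurveAt (I := 𝓘(ℝ, E)) (α ∘ (· + t)) X 0 := by
    have := hα.comp_add t; rwa [sub_self] at this
  have hβt : IsMIntegralCurveAt (I := 𝓘(ℝ, E)) (β ∘ (· + t)) X 0 := by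
    have := hβ.comp_add t; rwa [sub_self] at this
  have hyD : (0, y) ∈ D := hΦ.zero_mem y
  have hzD : (0, z) ∈ D := hΦ.zero_mem z
  have hΦy : IsMIntegralCurveAt (I := 𝓘(ℝ, E)) (fun u => Φ (u, y)) X 0 :=
    hΦ.isIntegralCurveAt_slice hV hyD
  have hΦz : IsMIntegralCurveAt (I := 𝓘(ℝ, E)) (fun u => Φ (u, z)) X 0 :=
    hΦ.isIntegralCurveAt_slice hV hzD
  have hA : (α ∘ (· + t)) =ᶠ[𝓝 (0:ℝ)] fun u => Φ (u, y) := by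
    apply isMIntegralCurveAt_eventuallyEq_of_contMDiffAt_boundaryless
      ((hX _).of_le (by exact_mod_cast le_top)) hαt hΦy
    simp [hy, hΦ.map_zero]
  have hB : (β ∘ (· + t)) =ᶠ[𝓝 (0:ℝ)] fun u => Φ (u, z) := by
    apply isMIntegralCurveAt_eventuallyEq_of_contMDiffAt_boundaryless
      ((hX _).of_le (by exact_mod_cast le_top)) hβt hΦz
    simp [hz, hΦ.map_zero]
  have hcy : ContinuousAt (fun u : ℝ => Φ (u, y)) 0 := by
    show ContinuousAt (Φ ∘ (fun u : ℝ => (u, y))) 0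
    exact ContinuousAt.comp (f := fun u : ℝ => (u, y)) (x := (0:ℝ))
      (hΦ.smoothOn.continuousOn.continuousAt (hΦ.isOpen_dom.mem_nhds hyD))
      ((continuous_id.prodMk continuous_const).continuousAt)
  have hcz : ContinuousAt (fun u : ℝ => Φ (u, z)) 0 := by
    show ContinuousAt (Φ ∘ (fun u : ℝ => (u, z))) 0
    exact ContinuousAt.comp (f := fun u : ℝ => (u, z)) (x := (0:ℝ))
      (hΦ.smoothOn.continuousOn.continuousAt (hΦ.isOpen_dom.mem_nhds hzD))
      ((continuous_id.prodMk continuous_const).continuousAt)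
  have hm1y : ∀ᶠ u in 𝓝 (0:ℝ), (u, y) ∈ D :=
    (continuous_id.prodMk continuous_const).continuousAt (hΦ.isOpen_dom.mem_nhds hyD)
  have hm1z : ∀ᶠ u in 𝓝 (0:ℝ), (u, z) ∈ D :=
    (continuous_id.prodMk continuous_const).continuousAt (hΦ.isOpen_dom.mem_nhds hzD)
  have hm2y : ∀ᶠ u in 𝓝 (0:ℝ), (-u, Φ (u, y)) ∈ D := by
    have hc : ContinuousAt (fun u : ℝ => (-u, Φ (u, y))) 0 :=
      (continuous_neg.continuousAt).prodMk hcy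
    apply hc
    apply hΦ.isOpen_dom.mem_nhds
    simpa [hΦ.map_zero y] using hyD
  have hm2z : ∀ᶠ u in 𝓝 (0:ℝ), (-u, Φ (u, z)) ∈ D := by
    have hc : ContinuousAt (fun u : ℝ => (-u, Φ (u, z))) 0 :=
      (continuous_neg.continuousAt).prodMk hcz
    apply hc
    apply hΦ.isOpen_dom.mem_nhds
    simpa [hΦ.map_zero z] using hzD
  have hev : ∀ᶠ u in 𝓝 (0:ℝ), α (u + t) ≠ β (u + t) := by
    filter_upwards [hA, hB, hm1y, hm1z, hm2y, hm2z] with u hAu hBu h1y h1z h2y h2z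
    intro hcon
    apply hne
    have hw : Φ (u, y) = Φ (u, z) := by
      rw [← hAu, ← hBu]; exact hcon
    have e1 : Φ (-u, Φ (u, y)) = Φ (u + -u, y) :=
      hΦ.comp u (-u) y h1y h2y (by rw [add_neg_cancel]; exact hyD)
    have e2 : Φ (-u, Φ (u, z)) = Φ (u + -u, z) :=
      hΦ.comp u (-u) z h1z h2z (by rw [add_neg_cancel]; exact hzD)
    calc α t = Φ (u + -u, y) := by rw [add_neg_cancel, hΦ.map_zero]
    _ = Φ (-u, Φ (u, y)) := e1.symm
    _ = Φ (-u, Φ (u, z)) := by rw [hw]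
    _ = Φ (u + -u, z) := e2
    _ = β t := by rw [add_neg_cancel, hΦ.map_zero]
  have htend : Filter.Tendsto (fun r : ℝ => r - t) (𝓝 t) (𝓝 0) := by
    simpa using (continuous_sub_right t).tendsto t
  have := htend.eventually hev
  simpa [sub_add_cancel] using this

lemma eqOn_integralCurves (hΦ : IsLocalFlow (E := E) Φ D) (hV : IsVelocityField (E := E) X Φ)
    (hX : ContMDiff 𝓘(ℝ, E) (𝓘(ℝ, E)).tangent (⊤ : ℕ∞)
      (fun x => (⟨x, X x⟩ : TangentBundle 𝓘(ℝ, E) M)))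
    {α β : ℝ → M} {s₁ s₂ : Set ℝ} (h1o : IsOpen s₁) (h2o : IsOpen s₂)
    (h1c : s₁.OrdConnected) (h2c : s₂.OrdConnected)
    (hα : IsMIntegralCurveOn (I := 𝓘(ℝ, E)) α X s₁)
    (hβ : IsMIntegralCurveOn (I := 𝓘(ℝ, E)) β X s₂)
    {t₀ : ℝ} (ht₁ : t₀ ∈ s₁) (ht₂ : t₀ ∈ s₂) (heq : α t₀ = β t₀) :
    EqOn α β (s₁ ∩ s₂) := by
  set u := {r : ℝ | α =ᶠ[𝓝 r] β} with hu
  set v := {r : ℝ | ∀ᶠ r' in 𝓝 r, α r' ≠ β r'} with hv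
  have huo : IsOpen u := by
    rw [isOpen_iff_mem_nhds]
    intro r hr
    exact hr.eventually_nhds
  have hvo : IsOpen v := by
    rw [isOpen_iff_mem_nhds]
    intro r hr
    exact hr.eventually_nhds
  have hsub : s₁ ∩ s₂ ⊆ u ∪ v := by
    rintro r ⟨hr1, hr2⟩
    by_cases h : α r = β r
    · exact Or.inl (isMIntegralCurveAt_eventuallyEq_of_contMDiffAt_boundaryless
        ((hX _).of_le (by exact_mod_cast le_top)) (hα.isMIntegralCurveAt (h1o.mem_nhds hr1))
        (hβ.isMIntegralCurveAt (h2o.mem_nhds hr2)) h)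
    · exact Or.inr (eventually_ne_of_ne hΦ hV hX (hα.isMIntegralCurveAt (h1o.mem_nhds hr1))
        (hβ.isMIntegralCurveAt (h2o.mem_nhds hr2)) h)
  have ht₀u : t₀ ∈ u := isMIntegralCurveAt_eventuallyEq_of_contMDiffAt_boundaryless
      ((hX _).of_le (by exact_mod_cast le_top)) (hα.isMIntegralCurveAt (h1o.mem_nhds ht₁))
      (hβ.isMIntegralCurveAt (h2o.mem_nhds ht₂)) heq
  have hpre : IsPreconnected (s₁ ∩ s₂) := (h1c.inter h2c).isPreconnected
  intro r hr
  by_contra hne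
  have hrv : r ∈ v := (hsub hr).resolve_left fun hru => hne hru.eq_of_nhds
  obtain ⟨w, _, hwu, hwv⟩ := hpre u v huo hvo hsub ⟨t₀, ⟨ht₁, ht₂⟩, ht₀u⟩ ⟨r, hr, hrv⟩
  exact hwv.self_of_nhds hwu.eq_of_nhds

lemma ordConnected_union_of_common {A B : Set ℝ} (hA : A.OrdConnected) (hB : B.OrdConnected)
    {c : ℝ} (hcA : c ∈ A) (hcB : c ∈ B) : (A ∪ B).OrdConnected := by
  constructor
  rintro a (ha | ha) b (hb | hb) r hr
  · exact Or.inl (hA.out ha hb hr)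
  · rcases le_total r c with h | h
    · exact Or.inl (hA.out ha hcA ⟨hr.1, h⟩)
    · exact Or.inr (hB.out hcB hb ⟨h, hr.2⟩)
  · rcases le_total r c with h | h
    · exact Or.inr (hB.out ha hcB ⟨hr.1, h⟩)
    · exact Or.inl (hA.out hcA hb ⟨h, hr.2⟩)
  · exact Or.inr (hB.out ha hb hr)

lemma glue_max (hΦ : IsLocalFlow (E := E) Φ D) (hV : IsVelocityField (E := E) X Φ)
    (hX : ContMDiff 𝓘(ℝ, E) (𝓘(ℝ, E)).tangent (⊤ : ℕ∞)
      (fun x => (⟨x, X x⟩ : TangentBundle 𝓘(ℝ, E) M)))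
    {γx : ℝ → M} {Ix : Set ℝ}
    (hIo : IsOpen Ix) (hIc : Ix.OrdConnected)
    (hγ : IsMIntegralCurveOn (I := 𝓘(ℝ, E)) γx X Ix)
    (huniq : ∀ (s' : Set ℝ) (γ' : ℝ → M), IsOpen s' → s'.OrdConnected → Ix ⊆ s' →
      IsMIntegralCurveOn (I := 𝓘(ℝ, E)) γ' X s' → Set.EqOn γ' γx Ix → s' = Ix)
    {β : ℝ → M} {J : Set ℝ} (hJo : IsOpen J) (hJc : J.OrdConnected)
    {c : ℝ} (hcJ : c ∈ J) (hcI : c ∈ Ix)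
    (hβ : IsMIntegralCurveOn (I := 𝓘(ℝ, E)) β X J)
    (heq : β c = γx c) :
    J ⊆ Ix ∧ EqOn β γx J := by
  classical
  have hEq : EqOn β γx (J ∩ Ix) :=
    eqOn_integralCurves hΦ hV hX hJo hIo hJc hIc hβ hγ hcJ hcI heq
  have hUo : IsOpen (Ix ∪ J) := hIo.union hJo
  have hUc : (Ix ∪ J).OrdConnected := ordConnected_union_of_common hIc hJc hcI hcJ
  set γ' : ℝ → M := fun r => if r ∈ Ix then γx r else β r with hγ'def
  have hγ'I : EqOn γ' γx Ix := fun r hr => if_pos hr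
  have hγ'J : EqOn γ' β J := by
    intro r hr
    by_cases h : r ∈ Ix
    · show (if r ∈ Ix then γx r else β r) = β r
      rw [if_pos h]
      exact (hEq ⟨hr, h⟩).symm
    · show (if r ∈ Ix then γx r else β r) = β r
      rw [if_neg h]
  have hγ'int : IsMIntegralCurveOn (I := 𝓘(ℝ, E)) γ' X (Ix ∪ J) := by
    rintro r (hr | hr)
    · have h1 := (hγ r hr).hasMFDerivAt (hIo.mem_nhds hr)
      have hev : γ' =ᶠ[𝓝 r] γx := Filter.eventuallyEq_of_mem (hIo.mem_nhds hr) hγ'I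
      have h2 := h1.congr_of_eventuallyEq hev
      have h3 : γx r = γ' r := (hγ'I hr).symm
      rw [← h3]
      exact h2.hasMFDerivWithinAt
    · have h1 := (hβ r hr).hasMFDerivAt (hJo.mem_nhds hr)
      have hev : γ' =ᶠ[𝓝 r] β := Filter.eventuallyEq_of_mem (hJo.mem_nhds hr) hγ'J
      have h2 := h1.congr_of_eventuallyEq hev
      have h3 : β r = γ' r := (hγ'J hr).symm
      rw [← h3]
      exact h2.hasMFDerivWithinAt
  have hs' := huniq (Ix ∪ J) γ' hUo hUc subset_union_left hγ'int hγ'I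
  have hJI : J ⊆ Ix := by rw [← hs']; exact subset_union_right
  exact ⟨hJI, fun r hr => hEq ⟨hr, hJI hr⟩⟩

variable {γ : M → ℝ → M} {Iv : M → Set ℝ}

def IsMaxData (X : (x : M) → TangentSpace 𝓘(ℝ, E) x) (γ : M → ℝ → M) (Iv : M → Set ℝ) : Prop :=
  ∀ x : M, IsOpen (Iv x) ∧ (Iv x).OrdConnected ∧ (0 : ℝ) ∈ Iv x ∧ γ x 0 = x ∧
      IsMIntegralCurveOn (I := 𝓘(ℝ, E)) (γ x) X (Iv x) ∧
      ∀ (s' : Set ℝ) (γ' : ℝ → M), IsOpen s' → s'.OrdConnected → Iv x ⊆ s' →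
        IsMIntegralCurveOn (I := 𝓘(ℝ, E)) γ' X s' → Set.EqOn γ' (γ x) (Iv x) → s' = Iv x

lemma lemC (hΦ : IsLocalFlow (E := E) Φ D) (hV : IsVelocityField (E := E) X Φ)
    (hX : ContMDiff 𝓘(ℝ, E) (𝓘(ℝ, E)).tangent (⊤ : ℕ∞)
      (fun x => (⟨x, X x⟩ : TangentBundle 𝓘(ℝ, E) M)))
    (hmax : IsMaxData X γ Iv) {t : ℝ} {x : M} (ht : (t, x) ∈ D) :
    t ∈ Iv x ∧ Φ (t, x) = γ x t := by
  obtain ⟨hIo, hIc, h0, h0γ, hint, huniq⟩ := hmax x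
  have hglue := glue_max hΦ hV hX hIo hIc hint huniq (hΦ.isOpen_slice x)
    (hΦ.ordConnected_slice x) (hΦ.zero_mem x) h0
    (hΦ.isIntegralCurveOn_slice hV x) (by rw [hΦ.map_zero x, h0γ])
  exact ⟨hglue.1 ht, hglue.2 ht⟩

lemma lemH (hΦ : IsLocalFlow (E := E) Φ D) (hV : IsVelocityField (E := E) X Φ)
    (hX : ContMDiff 𝓘(ℝ, E) (𝓘(ℝ, E)).tangent (⊤ : ℕ∞)
      (fun x => (⟨x, X x⟩ : TangentBundle 𝓘(ℝ, E) M)))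
    (hmax : IsMaxData X γ Iv) {x : M} {s : ℝ} (hs : s ∈ Iv x) :
    ∀ u ∈ Iv (γ x s), s + u ∈ Iv x ∧ γ x (s + u) = γ (γ x s) u := by
  obtain ⟨hIo, hIc, h0, h0γ, hint, huniq⟩ := hmax x
  set z := γ x s with hzdef
  obtain ⟨hIoz, hIcz, h0z, h0γz, hintz, _⟩ := hmax z
  set J : Set ℝ := {r : ℝ | -s + r ∈ Iv z} with hJdef
  have hJo : IsOpen J := hIoz.preimage (continuous_add_left (-s))
  have hJc : J.OrdConnected := by
    constructor
    intro a ha b hb r hr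
    exact hIcz.out ha hb ⟨add_le_add_right hr.1 _, add_le_add_right hr.2 _⟩
  have hJeq : s +ᵥ Iv z = J := by
    ext r
    rw [Set.mem_vadd_set_iff_neg_vadd_mem]
    rfl
  have hβ : IsMIntegralCurveOn (I := 𝓘(ℝ, E)) (γ z ∘ (· - s)) X J := by
    rw [hJdef]
    simp only [neg_add_eq_sub]
    exact (isMIntegralCurveOn_comp_sub (dt := s)).mpr hintz
  have hsJ : s ∈ J := by
    show -s + s ∈ Iv z
    rw [neg_add_cancel]
    exact h0z
  have heq : (γ z ∘ (· - s)) s = γ x s := by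
    show γ z (s - s) = γ x s
    rw [sub_self, h0γz]
  have hglue := glue_max hΦ hV hX hIo hIc hint huniq hJo hJc hsJ hs hβ heq
  intro u hu
  have huJ : s + u ∈ J := by
    show -s + (s + u) ∈ Iv z
    rw [neg_add_cancel_left]
    exact hu
  refine ⟨hglue.1 huJ, ?_⟩
  have := (hglue.2 huJ).symm
  rw [this]
  show γ z (s + u - s) = γ z u
  rw [add_sub_cancel_left]

/-- Product neighbourhoods of `(0, y)` inside `D`. -/
lemma IsLocalFlow.exists_prod_nhd (hΦ : IsLocalFlow (E := E) Φ D) (y : M) :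
    ∃ ε > (0:ℝ), ∃ V : Set M, IsOpen V ∧ y ∈ V ∧ Ioo (-ε) ε ×ˢ V ⊆ D := by
  obtain ⟨u, v, huo, hvo, h0u, hyv, huv⟩ :=
    isOpen_prod_iff.mp hΦ.isOpen_dom 0 y (hΦ.zero_mem y)
  obtain ⟨ε, hε, hball⟩ := Metric.isOpen_iff.mp huo 0 h0u
  refine ⟨ε, hε, v, hvo, hyv, ?_⟩
  refine subset_trans (Set.prod_mono ?_ subset_rfl) huv
  intro q hq
  apply hball
  rw [Real.ball_eq_Ioo]
  simpa using hq

/-- The flow property `P` used in the connectedness argument. -/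
def FlowSmoothAt (γ : M → ℝ → M) (Iv : M → Set ℝ) (x₀ : M) (r : ℝ) : Prop :=
  ∃ ε > (0:ℝ), ∃ W : Set M, IsOpen W ∧ x₀ ∈ W ∧
    (∀ x ∈ W, ∀ q ∈ Ioo (r - ε) (r + ε), q ∈ Iv x) ∧
    ContMDiffOn ((𝓘(ℝ, ℝ)).prod 𝓘(ℝ, E)) 𝓘(ℝ, E) (⊤ : ℕ∞) (fun p : ℝ × M => γ p.2 p.1)
      (Ioo (r - ε) (r + ε) ×ˢ W)

lemma lemS (hΦ : IsLocalFlow (E := E) Φ D) (hV : IsVelocityField (E := E) X Φ)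
    (hX : ContMDiff 𝓘(ℝ, E) (𝓘(ℝ, E)).tangent (⊤ : ℕ∞)
      (fun x => (⟨x, X x⟩ : TangentBundle 𝓘(ℝ, E) M)))
    (hmax : IsMaxData X γ Iv) {x₀ : M} {t : ℝ} (ht : t ∈ Iv x₀) :
    FlowSmoothAt (E := E) γ Iv x₀ t := by
  set u : Set ℝ := {r | FlowSmoothAt (E := E) γ Iv x₀ r} with hudef
  -- `u` is open
  have huo : IsOpen u := by
    rw [isOpen_iff_mem_nhds]
    rintro r ⟨ε, hε, W, hWo, hx₀W, hmem, hsm⟩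
    filter_upwards [Ioo_mem_nhds (by linarith : r - ε < r) (by linarith : r < r + ε)]
      with r' hr'
    have hε' : (0:ℝ) < min (r' - (r - ε)) ((r + ε) - r') := by
      apply lt_min <;> [linarith [hr'.1]; linarith [hr'.2]]
    have hsub : Ioo (r' - min (r' - (r - ε)) ((r + ε) - r')) (r' + min (r' - (r - ε)) ((r + ε) - r'))
        ⊆ Ioo (r - ε) (r + ε) := by
      intro q hq
      constructor
      · have := min_le_left (r' - (r - ε)) ((r + ε) - r')
        linarith [hq.1]
      · have := min_le_right (r' - (r - ε)) ((r + ε) - r')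
        linarith [hq.2]
    exact ⟨_, hε', W, hWo, hx₀W, fun x hx q hq => hmem x hx q (hsub hq),
      hsm.mono (Set.prod_mono hsub subset_rfl)⟩
  -- a smooth product patch inside the domain of the flow gives `FlowSmoothAt`
  -- the core closure argument
  have hcore : ∀ r ∈ Iv x₀, r ∈ closure u → r ∈ u := by
    intro r hr hrc
    obtain ⟨ε, hε, V, hVo, hyV, hDsub⟩ := hΦ.exists_prod_nhd (γ x₀ r)
    have hcont : ContinuousAt (γ x₀) r :=
      (((hmax x₀).2.2.2.2.1 r hr).hasMFDerivAt ((hmax x₀).1.mem_nhds hr)).continuousAt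
    have hN : Ioo (r - ε) (r + ε) ∩ (γ x₀) ⁻¹' V ∈ 𝓝 r := by
      refine Filter.inter_mem (Ioo_mem_nhds (by linarith) (by linarith)) ?_
      exact hcont.preimage_mem_nhds (hVo.mem_nhds hyV)
    obtain ⟨s, ⟨hsIoo, hsV⟩, ⟨ε', hε', W', hW'o, hx₀W', hmem', hsm'⟩⟩ :=
      mem_closure_iff_nhds.mp hrc _ hN
    -- `F x = γ x s` is smooth on `W'`
    have hsW' : ∀ x ∈ W', (s, x) ∈ Ioo (s - ε') (s + ε') ×ˢ W' := by
      intro x hx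
      exact ⟨⟨by linarith, by linarith⟩, hx⟩
    have hFsm : ContMDiffOn 𝓘(ℝ, E) 𝓘(ℝ, E) (⊤ : ℕ∞) (fun x : M => γ x s) W' := by
      have h2 : ContMDiffOn 𝓘(ℝ, E) ((𝓘(ℝ, ℝ)).prod 𝓘(ℝ, E)) (⊤ : ℕ∞)
          (fun x : M => ((s, x) : ℝ × M)) W' :=
        (ContMDiff.prodMk contMDiff_const contMDiff_id).contMDiffOn
      exact ContMDiffOn.comp (f := fun x : M => ((s, x) : ℝ × M)) hsm' h2
        (fun x hx => hsW' x hx)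
    have hsIv : ∀ x ∈ W', s ∈ Iv x := fun x hx =>
      hmem' x hx s ⟨by linarith, by linarith⟩
    set W : Set M := W' ∩ (fun x : M => γ x s) ⁻¹' V with hWdef
    have hWo : IsOpen W := hFsm.continuousOn.isOpen_inter_preimage hW'o hVo
    have hx₀W : x₀ ∈ W := ⟨hx₀W', hsV⟩
    set εr : ℝ := ε - |s - r| with hεrdef
    have hsr : |s - r| < ε := by
      rw [abs_sub_lt_iff]
      constructor <;> [linarith [hsIoo.2]; linarith [hsIoo.1]]
    have hεr : 0 < εr := by simp only [hεrdef]; linarith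
    have hkey : ∀ x ∈ W, ∀ r' ∈ Ioo (r - εr) (r + εr),
        r' ∈ Iv x ∧ γ x r' = Φ (r' - s, γ x s) := by
      rintro x ⟨hxW', hxV⟩ r' hr'
      have hd : |r' - s| < ε := by
        have h1 : |r' - r| < εr := by
          rw [abs_sub_lt_iff]
          constructor <;> [linarith [hr'.2]; linarith [hr'.1]]
        calc |r' - s| ≤ |r' - r| + |r - s| := abs_sub_le r' r s
        _ < εr + |s - r| := by rw [abs_sub_comm r s]; linarith
        _ = ε := by simp [hεrdef]
      have hD' : (r' - s, γ x s) ∈ D := by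
        apply hDsub
        refine ⟨?_, hxV⟩
        rw [mem_Ioo, ← abs_lt] at *
        exact hd
      obtain ⟨hIvz, hΦz⟩ := lemC hΦ hV hX hmax hD'
      obtain ⟨hmem2, heq2⟩ := lemH hΦ hV hX hmax (hsIv x hxW') (r' - s) hIvz
      rw [add_sub_cancel] at hmem2 heq2
      exact ⟨hmem2, by rw [heq2, hΦz]⟩
    refine ⟨εr, hεr, W, hWo, hx₀W, fun x hx q hq => (hkey x hx q hq).1, ?_⟩
    -- smoothness: γ x r' = Φ (r' - s, γ x s)
    have hGsm : ContMDiffOn ((𝓘(ℝ, ℝ)).prod 𝓘(ℝ, E)) ((𝓘(ℝ, ℝ)).prod 𝓘(ℝ, E)) (⊤ : ℕ∞)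
        (fun p : ℝ × M => ((p.1 - s, γ p.2 s) : ℝ × M)) (Ioo (r - εr) (r + εr) ×ˢ W) := by
      apply ContMDiffOn.prodMk
      · exact (contMDiff_fst.sub contMDiff_const).contMDiffOn
      · exact ContMDiffOn.comp (f := fun p : ℝ × M => p.2) hFsm contMDiff_snd.contMDiffOn
          (fun p hp => hp.2.1)
    have hcomp : ContMDiffOn ((𝓘(ℝ, ℝ)).prod 𝓘(ℝ, E)) 𝓘(ℝ, E) (⊤ : ℕ∞)
        (fun p : ℝ × M => Φ (p.1 - s, γ p.2 s)) (Ioo (r - εr) (r + εr) ×ˢ W) := by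
      apply ContMDiffOn.comp (f := fun p : ℝ × M => ((p.1 - s, γ p.2 s) : ℝ × M))
        hΦ.smoothOn hGsm
      rintro ⟨q, x⟩ hp
      apply hDsub
      have hd : |q - s| < ε := by
        have h1 : |q - r| < εr := by
          rw [abs_sub_lt_iff]
          constructor <;> [linarith [hp.1.2]; linarith [hp.1.1]]
        calc |q - s| ≤ |q - r| + |r - s| := abs_sub_le q r s
        _ < εr + |s - r| := by rw [abs_sub_comm r s]; linarith
        _ = ε := by simp [hεrdef]
      exact ⟨by rw [mem_Ioo, ← abs_lt]; exact hd, hp.2.2⟩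
    apply hcomp.congr
    rintro ⟨q, x⟩ hp
    exact (hkey x hp.2 q hp.1).2
  -- base point `0 ∈ u`
  have h0u : (0:ℝ) ∈ u := by
    obtain ⟨ε, hε, V, hVo, hx₀V, hDsub⟩ := hΦ.exists_prod_nhd x₀
    have hIoo : Ioo ((0:ℝ) - ε) (0 + ε) = Ioo (-ε) ε := by norm_num
    refine ⟨ε, hε, V, hVo, hx₀V, ?_, ?_⟩
    · intro x hx q hq
      rw [hIoo] at hq
      exact (lemC hΦ hV hX hmax (hDsub ⟨hq, hx⟩)).1
    · rw [hIoo]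
      apply (hΦ.smoothOn.mono hDsub).congr
      rintro ⟨q, x⟩ hp
      exact (lemC hΦ hV hX hmax (hDsub hp)).2.symm
  -- connectedness
  have hpre : IsPreconnected (Iv x₀) := (hmax x₀).2.1.isPreconnected
  have hvo : IsOpen (closure u)ᶜ := isOpen_compl_iff.mpr isClosed_closure
  have hsub : Iv x₀ ⊆ u ∪ (closure u)ᶜ := by
    intro r hr
    by_cases h : r ∈ closure u
    · exact Or.inl (hcore r hr h)
    · exact Or.inr h
  by_contra htu
  obtain ⟨w, _, hwu, hwv⟩ := hpre u (closure u)ᶜ huo hvo hsub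
    ⟨0, (hmax x₀).2.2.1, h0u⟩ ⟨t, ht, fun hc => htu (hcore t ht hc)⟩
  exact hwv (subset_closure hwu)

end Aux

/-- **Existence and uniqueness of the maximal local flow.** If `X` is a smooth locally
integrable vector field on `M` and `γ x : I x → M` is the maximal integral curve of `X`
through each `x`, then `𝒟_X := {(t, x) | t ∈ I x}` is open, `Φ (t, x) := γ x t` is a smooth
local flow on `𝒟_X` with velocity field `X`, and it is the unique such local flow. -/
theorem maximal_local_flow_exists_unique
    {E : Type*} [NormedAddCommGroup E] [NormedSpace ℝ E] [CompleteSpace E]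
    {M : Type*} [TopologicalSpace M] [ChartedSpace E M]
    [IsManifold 𝓘(ℝ, E) (⊤ : ℕ∞) M]
    (X : (x : M) → TangentSpace 𝓘(ℝ, E) x)
    (hX : ContMDiff 𝓘(ℝ, E) (𝓘(ℝ, E)).tangent (⊤ : ℕ∞)
      (fun x => (⟨x, X x⟩ : TangentBundle 𝓘(ℝ, E) M)))
    (hloc : ∃ (Φ : ℝ × M → M) (D : Set (ℝ × M)), IsLocalFlow (E := E) Φ D ∧ IsVelocityField X Φ)
    (γ : M → ℝ → M) (I : M → Set ℝ)
    (hmax : ∀ x : M, IsOpen (I x) ∧ (I x).OrdConnected ∧ (0 : ℝ) ∈ I x ∧ γ x 0 = x ∧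
      (∀ t ∈ I x, HasMFDerivAt 𝓘(ℝ, ℝ) 𝓘(ℝ, E) (γ x) t ((1 : ℝ →L[ℝ] ℝ).smulRight (X (γ x t)))) ∧
      ∀ (s' : Set ℝ) (γ' : ℝ → M), IsOpen s' → s'.OrdConnected → I x ⊆ s' →
        (∀ t ∈ s', HasMFDerivAt 𝓘(ℝ, ℝ) 𝓘(ℝ, E) γ' t ((1 : ℝ →L[ℝ] ℝ).smulRight (X (γ' t)))) → Set.EqOn γ' (γ x) (I x) → s' = I x) :
    IsLocalFlow (E := E) (fun p : ℝ × M => γ p.2 p.1) {p : ℝ × M | p.1 ∈ I p.2} ∧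
    IsVelocityField X (fun p : ℝ × M => γ p.2 p.1) ∧
    ∀ Ψ : ℝ × M → M, IsLocalFlow (E := E) Ψ {p : ℝ × M | p.1 ∈ I p.2} → IsVelocityField X Ψ →
      Set.EqOn Ψ (fun p : ℝ × M => γ p.2 p.1) {p : ℝ × M | p.1 ∈ I p.2} := by
  obtain ⟨Φ, D, hΦ, hV⟩ := hloc
  have hmd : IsMaxData X γ I := fun x => ⟨(hmax x).1, (hmax x).2.1, (hmax x).2.2.1,
    (hmax x).2.2.2.1, fun t ht => ((hmax x).2.2.2.2.1 t ht).hasMFDerivWithinAt,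
    fun s' γ' hs'o hs'c hsub hγ' heq => (hmax x).2.2.2.2.2 s' γ' hs'o hs'c hsub
      (fun t ht => (hγ' t ht).hasMFDerivAt (hs'o.mem_nhds ht)) heq⟩
  have hopen : IsOpen {p : ℝ × M | p.1 ∈ I p.2} := by
    rw [isOpen_iff_mem_nhds]
    rintro ⟨t, x⟩ ht
    obtain ⟨ε, hε, W, hWo, hxW, hmem, -⟩ := lemS hΦ hV hX hmd ht
    have hnn : Ioo (t - ε) (t + ε) ×ˢ W ∈ 𝓝 ((t, x) : ℝ × M) :=
      prod_mem_nhds (Ioo_mem_nhds (by linarith) (by linarith)) (hWo.mem_nhds hxW)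
    exact Filter.mem_of_superset hnn (fun q hq => hmem q.2 hq.2 q.1 hq.1)
  have hsmooth : ContMDiffOn ((𝓘(ℝ, ℝ)).prod 𝓘(ℝ, E)) 𝓘(ℝ, E) (⊤ : ℕ∞)
      (fun p : ℝ × M => γ p.2 p.1) {p : ℝ × M | p.1 ∈ I p.2} := by
    intro p hp
    obtain ⟨ε, hε, W, hWo, hxW, hmem, hsm⟩ := lemS hΦ hV hX hmd hp
    have hnn : Ioo (p.1 - ε) (p.1 + ε) ×ˢ W ∈ 𝓝 p := by
      rw [← Prod.mk.eta (p := p)]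
      exact prod_mem_nhds (Ioo_mem_nhds (by linarith) (by linarith)) (hWo.mem_nhds hxW)
    exact (hsm.contMDiffAt hnn).contMDiffWithinAt
  refine ⟨⟨hopen, fun x => (hmax x).2.2.1, fun x => (hmax x).2.1, hsmooth,
      fun x => (hmax x).2.2.2.1, ?_⟩, ?_, ?_⟩
  · -- composition law
    intro s t x hs htz _
    exact (lemH hΦ hV hX hmd hs t htz).2.symm
  · -- velocity field
    intro x
    have h := (hmax x).2.2.2.2.1 0 (hmax x).2.2.1
    rw [(hmax x).2.2.2.1] at h
    exact h
  · -- uniqueness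
    intro Ψ hΨ hΨV
    rintro ⟨t, x⟩ ht
    have hcurve : IsMIntegralCurveOn (I := 𝓘(ℝ, E)) (fun u => Ψ (u, x)) X (I x) :=
      hΨ.isIntegralCurveOn_slice hΨV x
    have heq0 : Ψ (0, x) = γ x 0 := by rw [hΨ.map_zero x, (hmax x).2.2.2.1]
    have := eqOn_integralCurves hΦ hV hX (hmax x).1 (hmax x).1 (hmax x).2.1 (hmax x).2.1
      hcurve ((hmd x).2.2.2.2.1) (hmax x).2.2.1 (hmax x).2.2.1 heq0
    have h2 := this ⟨ht, ht⟩
    exact h2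
end

section
/- (Uniqueness of integral curves.) Let M be a smooth manifold without boundary modeled on a real Banach space, let Φ : 𝒟 → M be a smooth local flow, and let X be its velocity field. Then: (i) for every x ∈ M the flow line t ↦ Φ(t,x), defined on I_x = {t : (t,x) ∈ 𝒟}, is an integral curve of X; and (ii) for every open interval I containing 0 and every x ∈ M, any two integral curves γ, η : I → M of X with γ(0) = η(0) are equal. -/
open scoped Manifold
open Set Filter Topology

/-- The December 2024 Mathlib meaning of `IsIntegralCurveOn` on a manifold. -/
def OldIsIntegralCurveOn {E : Type*} [NormedAddCommGroup E] [NormedSpace ℝ E]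
    {H : Type*} [TopologicalSpace H] {I : ModelWithCorners ℝ E H}
    {M : Type*} [TopologicalSpace M] [ChartedSpace H M]
    (γ : ℝ → M) (v : (x : M) → TangentSpace I x) (s : Set ℝ) : Prop :=
  ∀ t ∈ s, HasMFDerivAt 𝓘(ℝ, ℝ) I γ t ((1 : ℝ →L[ℝ] ℝ).smulRight <| v (γ t))

section Aux

variable {E : Type*} [NormedAddCommGroup E] [NormedSpace ℝ E]
    {M : Type*} [TopologicalSpace M] [ChartedSpace E M]
    [IsManifold 𝓘(ℝ, E) (⊤ : ℕ∞) M]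
    {Φ : ℝ × M → M} {D : Set (ℝ × M)}
    {X : (x : M) → TangentSpace 𝓘(ℝ, E) x}

/-- A curve with zero manifold derivative on `[a,b]` is constant. -/
theorem const_of_zero_mfderiv {g : ℝ → M} {a b : ℝ} (hab : a ≤ b)
    (hg : ∀ s ∈ Icc a b, HasMFDerivAt 𝓘(ℝ, ℝ) 𝓘(ℝ, E) g s 0) : g b = g a := by
  set A := {s ∈ Icc a b | g s = g a} with hA
  have hgc : ∀ s ∈ Icc a b, ContinuousAt g s := fun s hs => (hg s hs).continuousAt
  have haA : a ∈ A := ⟨⟨le_refl a, hab⟩, rfl⟩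
  have hAne : A.Nonempty := ⟨a, haA⟩
  have hAbd : BddAbove A := ⟨b, fun s hs => hs.1.2⟩
  set c := sSup A with hc
  have hac : a ≤ c := le_csSup hAbd haA
  have hcb : c ≤ b := csSup_le hAne fun s hs => hs.1.2
  have hcIcc : c ∈ Icc a b := ⟨hac, hcb⟩
  have hccl : c ∈ closure A := csSup_mem_closure hAne hAbd
  have hne : (𝓝[A] c).NeBot := mem_closure_iff_nhdsWithin_neBot.mp hccl
  have hsrc' : ∀ᶠ s in 𝓝 c, g s ∈ (extChartAt 𝓘(ℝ, E) (g c)).source :=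
    (hgc c hcIcc).preimage_mem_nhds (extChartAt_source_mem_nhds _)
  have hsrc : ∀ᶠ s in 𝓝[A] c, g s ∈ (extChartAt 𝓘(ℝ, E) (g c)).source :=
    eventually_nhdsWithin_of_eventually_nhds hsrc'
  have hgaA : ∀ᶠ s in 𝓝[A] c, g s = g a :=
    eventually_mem_nhdsWithin.mono fun s hs => hs.2
  obtain ⟨s₀, hs₀src, hs₀eq⟩ := (hsrc.and hgaA).exists
  have hgasrc : g a ∈ (extChartAt 𝓘(ℝ, E) (g c)).source := hs₀eq ▸ hs₀src
  have hgca : g c = g a := by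
    have hlim : Tendsto (fun s => extChartAt 𝓘(ℝ, E) (g c) (g s)) (𝓝[A] c)
        (𝓝 (extChartAt 𝓘(ℝ, E) (g c) (g c))) := by
      exact ((continuousAt_extChartAt _).comp (hgc c hcIcc)).continuousWithinAt.tendsto
    have hlim2 : Tendsto (fun s => extChartAt 𝓘(ℝ, E) (g c) (g s)) (𝓝[A] c)
        (𝓝 (extChartAt 𝓘(ℝ, E) (g c) (g a))) := by
      refine Tendsto.congr' ?_ tendsto_const_nhds
      exact hgaA.mono fun s hs => by simp [hs]
    exact (extChartAt 𝓘(ℝ, E) (g c)).injOn (mem_extChartAt_source _) hgasrc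
      (tendsto_nhds_unique hlim hlim2)
  rcases eq_or_lt_of_le hcb with h | h
  · rw [← h]; exact hgca
  · exfalso
    obtain ⟨δ, hδpos, hδ⟩ := Metric.eventually_nhds_iff.mp hsrc'
    set d := min b (c + δ / 2) with hd
    have hcd : c < d := lt_min h (by linarith)
    have hdb : d ≤ b := min_le_left _ _
    have hsub : Icc c d ⊆ Icc a b := Icc_subset_Icc hac hdb
    have hmem : ∀ s ∈ Icc c d, g s ∈ (extChartAt 𝓘(ℝ, E) (g c)).source := by
      intro s hs
      apply hδ
      have h1 : s ≤ c + δ / 2 := hs.2.trans (min_le_right _ _)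
      have h2 : c ≤ s := hs.1
      rw [Real.dist_eq, abs_lt]
      constructor <;> linarith
    have hconst : ∀ s ∈ Icc c d,
        extChartAt 𝓘(ℝ, E) (g c) (g s) = extChartAt 𝓘(ℝ, E) (g c) (g c) := by
      apply constant_of_has_deriv_right_zero
      · intro s hs
        exact (((continuousAt_extChartAt' (hmem s hs)).comp
          (hgc s (hsub hs)))).continuousWithinAt
      · intro s hs
        have h1 : HasMFDerivAt 𝓘(ℝ, ℝ) 𝓘(ℝ, E) g s 0 := hg s (hsub ⟨hs.1, hs.2.le⟩)
        have hmem' : g s ∈ (chartAt E (g c)).source := by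
          rw [← extChartAt_source 𝓘(ℝ, E)]; exact hmem s ⟨hs.1, hs.2.le⟩
        have h3 := (hasMFDerivAt_extChartAt (I := 𝓘(ℝ, E)) hmem').comp s h1
        replace h3 : HasMFDerivAt 𝓘(ℝ, ℝ) 𝓘(ℝ, E) ((extChartAt 𝓘(ℝ, E) (g c)) ∘ g) s 0 :=
          h3.congr_mfderiv (ContinuousLinearMap.comp_zero _)
        have h4 : HasDerivAt ((extChartAt 𝓘(ℝ, E) (g c)) ∘ g) 0 s :=
          (hasFDerivAt_iff_hasDerivAt (f' := (0 : ℝ →L[ℝ] E))).mp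
            (hasMFDerivAt_iff_hasFDerivAt.mp h3)
        exact h4.hasDerivWithinAt
    have hgd : g d = g c := by
      refine (extChartAt 𝓘(ℝ, E) (g c)).injOn (hmem d ⟨hcd.le, le_rfl⟩)
        (mem_extChartAt_source _) (hconst d ⟨hcd.le, le_rfl⟩)
    have hdA : d ∈ A := ⟨⟨hac.trans hcd.le, hdb⟩, hgd.trans hgca⟩
    exact absurd (le_csSup hAbd hdA) (not_le.mpr hcd)


/-- Pairing of curves, `HasMFDerivAt` version. -/
theorem hasMFDerivAt_prod_curve {f : ℝ → ℝ} {γ : ℝ → M} {s : ℝ} {f' : ℝ →L[ℝ] ℝ}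
    {γ' : ℝ →L[ℝ] TangentSpace 𝓘(ℝ, E) (γ s)}
    (hf : HasMFDerivAt 𝓘(ℝ, ℝ) 𝓘(ℝ, ℝ) f s f') (hγ : HasMFDerivAt 𝓘(ℝ, ℝ) 𝓘(ℝ, E) γ s γ') :
    HasMFDerivAt 𝓘(ℝ, ℝ) ((𝓘(ℝ, ℝ)).prod 𝓘(ℝ, E)) (fun t => (f t, γ t)) s (f'.prod γ') := by
  have h := (hf.mdifferentiableAt.prodMk hγ.mdifferentiableAt).hasMFDerivAt
  rwa [hf.mdifferentiableAt.mfderiv_prod hγ.mdifferentiableAt, hf.mfderiv, hγ.mfderiv] at h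

/-- The flow line through `x` is differentiable with velocity `X` at every time in the slice. -/
theorem IsLocalFlow.hasMFDerivAt_flow (hΦ : IsLocalFlow (E := E) Φ D) (hX : IsVelocityField X Φ)
    {t₀ : ℝ} {x : M} (h : (t₀, x) ∈ D) :
    HasMFDerivAt 𝓘(ℝ, ℝ) 𝓘(ℝ, E) (fun t => Φ (t, x)) t₀
      ((1 : ℝ →L[ℝ] ℝ).smulRight (X (Φ (t₀, x)))) := by
  set q := Φ (t₀, x) with hq
  have h1 : HasMFDerivAt 𝓘(ℝ, ℝ) 𝓘(ℝ, E) (fun s => Φ (s, q)) (t₀ - t₀)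
      ((1 : ℝ →L[ℝ] ℝ).smulRight (X q)) := by rw [sub_self]; exact hX q
  have hin : HasMFDerivAt 𝓘(ℝ, ℝ) 𝓘(ℝ, ℝ) (fun t => t - t₀) t₀
      (ContinuousLinearMap.id ℝ ℝ) :=
    ((hasFDerivAt_id t₀).sub_const t₀).hasMFDerivAt
  have h2 := h1.comp (f := fun t => t - t₀) t₀ hin
  have h2' : HasMFDerivAt 𝓘(ℝ, ℝ) 𝓘(ℝ, E) ((fun s => Φ (s, q)) ∘ fun t => t - t₀) t₀
      ((1 : ℝ →L[ℝ] ℝ).smulRight (X q)) := by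
    exact h2.congr_mfderiv (ContinuousLinearMap.comp_id _)
  refine h2'.congr_of_eventuallyEq ?_
  have hev1 : ∀ᶠ t in 𝓝 t₀, (t - t₀, q) ∈ D := by
    have hc : ContinuousAt (fun t => ((t - t₀ : ℝ), q)) t₀ :=
      ((continuous_id.sub continuous_const).prodMk continuous_const).continuousAt
    have : (0, q) ∈ D := hΦ.zero_mem q
    have := hc.preimage_mem_nhds (hΦ.isOpen_dom.mem_nhds (by simpa using this))
    exact this
  have hev2 : ∀ᶠ t in 𝓝 t₀, (t, x) ∈ D := by
    have hc : ContinuousAt (fun t => ((t : ℝ), x)) t₀ :=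
      (continuous_id.prodMk continuous_const).continuousAt
    exact hc.preimage_mem_nhds (hΦ.isOpen_dom.mem_nhds h)
  filter_upwards [hev1, hev2] with t ha hb
  have h3 := hΦ.comp t₀ (t - t₀) x h ha (by rwa [add_sub_cancel])
  rw [add_sub_cancel] at h3
  simpa [Function.comp] using h3.symm

/-- Part (i): flow lines are integral curves on slices. -/
theorem IsLocalFlow.isIntegralCurveOn (hΦ : IsLocalFlow (E := E) Φ D) (hX : IsVelocityField X Φ)
    (x : M) : OldIsIntegralCurveOn (fun t => Φ (t, x)) X {t : ℝ | (t, x) ∈ D} :=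
  fun _ ht => hΦ.hasMFDerivAt_flow hX ht

section Identities

variable (hΦ : IsLocalFlow (E := E) Φ D) (hX : IsVelocityField X Φ)
include hΦ hX

theorem IsLocalFlow.mfderiv_fst {u : ℝ} {q : M} (h : (u, q) ∈ D) :
    mfderiv ((𝓘(ℝ, ℝ)).prod 𝓘(ℝ, E)) 𝓘(ℝ, E) Φ (u, q) ((1 : ℝ), (0 : E)) = X (Φ (u, q)) := by
  have hF : HasMFDerivAt ((𝓘(ℝ, ℝ)).prod 𝓘(ℝ, E)) 𝓘(ℝ, E) Φ (u, q)
      (mfderiv ((𝓘(ℝ, ℝ)).prod 𝓘(ℝ, E)) 𝓘(ℝ, E) Φ (u, q)) :=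
    ((hΦ.smoothOn.contMDiffAt (hΦ.isOpen_dom.mem_nhds h)).mdifferentiableAt
      (by simp)).hasMFDerivAt
  have hc1 : HasMFDerivAt 𝓘(ℝ, ℝ) ((𝓘(ℝ, ℝ)).prod 𝓘(ℝ, E)) (fun t => (t, q)) u
      ((ContinuousLinearMap.id ℝ ℝ).prod 0) :=
    hasMFDerivAt_prod_curve (hasMFDerivAt_id u) (hasMFDerivAt_const q u)
  have hcomp := hF.comp u hc1
  have hcomp' : HasMFDerivAt 𝓘(ℝ, ℝ) 𝓘(ℝ, E) (fun t => Φ (t, q)) u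
      ((mfderiv ((𝓘(ℝ, ℝ)).prod 𝓘(ℝ, E)) 𝓘(ℝ, E) Φ (u, q)).comp
        ((ContinuousLinearMap.id ℝ ℝ).prod 0)) := hcomp
  have huniq := hasMFDerivAt_unique hcomp' (hΦ.hasMFDerivAt_flow hX h)
  have h9 := DFunLike.congr_fun huniq (1 : ℝ)
  have h10 : (ContinuousLinearMap.smulRight (1 : ℝ →L[ℝ] ℝ) (X (Φ (u, q)))) (1 : ℝ)
      = X (Φ (u, q)) := by simp
  exact h9.trans h10

theorem IsLocalFlow.mfderiv_snd {u : ℝ} {q : M} (h : (u, q) ∈ D) :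
    mfderiv ((𝓘(ℝ, ℝ)).prod 𝓘(ℝ, E)) 𝓘(ℝ, E) Φ (u, q) ((0 : ℝ), X q) = X (Φ (u, q)) := by
  have hmz : Φ (0, q) = q := hΦ.map_zero q
  have hF : HasMFDerivAt ((𝓘(ℝ, ℝ)).prod 𝓘(ℝ, E)) 𝓘(ℝ, E) Φ (u, q)
      (mfderiv ((𝓘(ℝ, ℝ)).prod 𝓘(ℝ, E)) 𝓘(ℝ, E) Φ (u, q)) :=
    ((hΦ.smoothOn.contMDiffAt (hΦ.isOpen_dom.mem_nhds h)).mdifferentiableAt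
      (by simp)).hasMFDerivAt
  have hc2 : HasMFDerivAt 𝓘(ℝ, ℝ) ((𝓘(ℝ, ℝ)).prod 𝓘(ℝ, E)) (fun s => ((u : ℝ), Φ (s, q))) 0
      ((0 : ℝ →L[ℝ] ℝ).prod ((1 : ℝ →L[ℝ] ℝ).smulRight (X q))) :=
    hasMFDerivAt_prod_curve (hasMFDerivAt_const u 0) (hX q)
  have hF2 : HasMFDerivAt ((𝓘(ℝ, ℝ)).prod 𝓘(ℝ, E)) 𝓘(ℝ, E) Φ ((fun s => ((u : ℝ), Φ (s, q))) 0)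
      (mfderiv ((𝓘(ℝ, ℝ)).prod 𝓘(ℝ, E)) 𝓘(ℝ, E) Φ (u, q)) := by
    show HasMFDerivAt ((𝓘(ℝ, ℝ)).prod 𝓘(ℝ, E)) 𝓘(ℝ, E) Φ ((u : ℝ), Φ (0, q))
      (mfderiv ((𝓘(ℝ, ℝ)).prod 𝓘(ℝ, E)) 𝓘(ℝ, E) Φ (u, q))
    rw [hmz]; exact hF
  have hcomp := hF2.comp 0 hc2
  -- the composed map agrees near 0 with `s ↦ Φ (s + u, q)`
  have hev : (fun s => Φ (s + u, q)) =ᶠ[𝓝 (0 : ℝ)] (Φ ∘ fun s => ((u : ℝ), Φ (s, q))) := by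
    have hev1 : ∀ᶠ s in 𝓝 (0 : ℝ), (s, q) ∈ D := by
      have hc : ContinuousAt (fun s => ((s : ℝ), q)) 0 :=
        (continuous_id.prodMk continuous_const).continuousAt
      exact hc.preimage_mem_nhds (hΦ.isOpen_dom.mem_nhds (hΦ.zero_mem q))
    have hev2 : ∀ᶠ s in 𝓝 (0 : ℝ), ((u : ℝ), Φ (s, q)) ∈ D := by
      have hc : ContinuousAt (fun s => ((u : ℝ), Φ (s, q))) 0 :=
        continuous_const.continuousAt.prodMk (hX q).continuousAt
      refine hc.preimage_mem_nhds (hΦ.isOpen_dom.mem_nhds ?_)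
      simpa [hmz] using h
    have hev3 : ∀ᶠ s in 𝓝 (0 : ℝ), (s + u, q) ∈ D := by
      have hc : ContinuousAt (fun s => ((s + u : ℝ), q)) 0 :=
        ((continuous_id.add continuous_const).prodMk continuous_const).continuousAt
      refine hc.preimage_mem_nhds (hΦ.isOpen_dom.mem_nhds ?_)
      simpa using h
    filter_upwards [hev1, hev2, hev3] with s h1 h2 h3
    exact (hΦ.comp s u q h1 h2 h3).symm
  have h5 := hcomp.congr_of_eventuallyEq hev
  have h6 : HasMFDerivAt 𝓘(ℝ, ℝ) 𝓘(ℝ, E) (fun s => Φ (s + u, q)) 0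
      ((1 : ℝ →L[ℝ] ℝ).smulRight (X (Φ (u, q)))) := by
    have hout : HasMFDerivAt 𝓘(ℝ, ℝ) 𝓘(ℝ, E) (fun t => Φ (t, q)) ((0 : ℝ) + u)
        ((1 : ℝ →L[ℝ] ℝ).smulRight (X (Φ (u, q)))) := by
      rw [zero_add]; exact hΦ.hasMFDerivAt_flow hX h
    have hin : HasMFDerivAt 𝓘(ℝ, ℝ) 𝓘(ℝ, ℝ) (fun s => s + u) 0
        (ContinuousLinearMap.id ℝ ℝ) :=
      ((hasFDerivAt_id (0 : ℝ)).add_const u).hasMFDerivAt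
    have := hout.comp (f := fun s => s + u) 0 hin
    exact this.congr_mfderiv (ContinuousLinearMap.comp_id _)
  have huniq := hasMFDerivAt_unique h5 h6
  have h9 := DFunLike.congr_fun huniq (1 : ℝ)
  have h10 : (ContinuousLinearMap.smulRight (1 : ℝ →L[ℝ] ℝ) (X (Φ (u, q)))) (1 : ℝ)
      = X (Φ (u, q)) := by simp
  have h11 : ((mfderiv ((𝓘(ℝ, ℝ)).prod 𝓘(ℝ, E)) 𝓘(ℝ, E) Φ (u, q)).comp
      (ContinuousLinearMap.prod 0 ((1 : ℝ →L[ℝ] ℝ).smulRight (X q)))) (1 : ℝ)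
      = mfderiv ((𝓘(ℝ, ℝ)).prod 𝓘(ℝ, E)) 𝓘(ℝ, E) Φ (u, q) ((0 : ℝ), X q) := by
    show mfderiv ((𝓘(ℝ, ℝ)).prod 𝓘(ℝ, E)) 𝓘(ℝ, E) Φ (u, q) ((0 : ℝ), (1:ℝ) • X q) = _
    rw [one_smul]
  exact h11.symm.trans (h9.trans h10)

/-- Any integral curve of the velocity field locally coincides with the flow. -/
theorem IsLocalFlow.eventually_eq_flow {γ : ℝ → M} {I : Set ℝ} (hI : IsOpen I)
    (hγ : OldIsIntegralCurveOn γ X I) {t₀ : ℝ} (ht₀ : t₀ ∈ I) :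
    ∀ᶠ s in 𝓝 (0 : ℝ), γ (t₀ + s) = Φ (s, γ t₀) := by
  set p := γ t₀ with hp
  obtain ⟨V, hV, U, hU, hVU⟩ := mem_nhds_prod_iff.mp (hΦ.isOpen_dom.mem_nhds (hΦ.zero_mem p))
  obtain ⟨ε₁, hε₁, hball₁⟩ := Metric.mem_nhds_iff.mp hV
  have hIU : I ∩ γ ⁻¹' U ∈ 𝓝 t₀ :=
    Filter.inter_mem (hI.mem_nhds ht₀) (((hγ t₀ ht₀).continuousAt).preimage_mem_nhds hU)
  obtain ⟨ε₂, hε₂, hball₂⟩ := Metric.mem_nhds_iff.mp hIU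
  set ε := min (ε₁ / 2) ε₂ with hε
  have hεpos : 0 < ε := lt_min (by linarith) hε₂
  rw [Metric.eventually_nhds_iff]
  refine ⟨ε, hεpos, ?_⟩
  intro t ht
  rw [dist_zero_right, Real.norm_eq_abs] at ht
  -- auxiliary facts for `s` with `|s| ≤ |t|`
  have hsI : ∀ s : ℝ, |s| ≤ |t| → t₀ + s ∈ I ∧ γ (t₀ + s) ∈ U := by
    intro s hs
    have : t₀ + s ∈ Metric.ball t₀ ε₂ := by
      rw [Metric.mem_ball, dist_eq_norm]
      have : ε ≤ ε₂ := min_le_right _ _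
      simpa using lt_of_le_of_lt hs (lt_of_lt_of_le ht this)
    exact hball₂ this
  have hmemD : ∀ s : ℝ, |s| ≤ |t| → (t - s, γ (t₀ + s)) ∈ D := by
    intro s hs
    refine hVU (Set.mk_mem_prod (hball₁ ?_) (hsI s hs).2)
    rw [Metric.mem_ball, dist_zero_right]
    calc ‖t - s‖ ≤ |t| + |s| := abs_sub t s
    _ ≤ |t| + |t| := by linarith
    _ < ε + ε := by linarith
    _ ≤ ε₁ / 2 + ε₁ / 2 := by have := min_le_left (ε₁ / 2) ε₂; linarith
    _ = ε₁ := by ring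
  set g : ℝ → M := fun s => Φ (t - s, γ (t₀ + s)) with hg
  have hgderiv : ∀ s : ℝ, |s| ≤ |t| → HasMFDerivAt 𝓘(ℝ, ℝ) 𝓘(ℝ, E) g s 0 := by
    intro s hs
    have memD := hmemD s hs
    have hF : HasMFDerivAt ((𝓘(ℝ, ℝ)).prod 𝓘(ℝ, E)) 𝓘(ℝ, E) Φ (t - s, γ (t₀ + s))
        (mfderiv ((𝓘(ℝ, ℝ)).prod 𝓘(ℝ, E)) 𝓘(ℝ, E) Φ (t - s, γ (t₀ + s))) :=
      ((hΦ.smoothOn.contMDiffAt (hΦ.isOpen_dom.mem_nhds memD)).mdifferentiableAt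
        (by simp)).hasMFDerivAt
    have hf1 : HasMFDerivAt 𝓘(ℝ, ℝ) 𝓘(ℝ, ℝ) (fun s' => t - s') s
        (-(ContinuousLinearMap.id ℝ ℝ)) :=
      ((hasFDerivAt_id s).const_sub t).hasMFDerivAt
    have hf2 : HasMFDerivAt 𝓘(ℝ, ℝ) 𝓘(ℝ, E) (fun s' => γ (t₀ + s')) s
        ((1 : ℝ →L[ℝ] ℝ).smulRight (X (γ (t₀ + s)))) := by
      have hin : HasMFDerivAt 𝓘(ℝ, ℝ) 𝓘(ℝ, ℝ) (fun s' => t₀ + s') s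
          (ContinuousLinearMap.id ℝ ℝ) :=
        ((hasFDerivAt_id s).const_add t₀).hasMFDerivAt
      have hout := hγ (t₀ + s) (hsI s hs).1
      have := hout.comp (f := fun s' => t₀ + s') s hin
      exact this.congr_mfderiv (ContinuousLinearMap.comp_id _)
    have hc := hasMFDerivAt_prod_curve hf1 hf2
    have hcomp := hF.comp s hc
    have e2 : mfderiv ((𝓘(ℝ, ℝ)).prod 𝓘(ℝ, E)) 𝓘(ℝ, E) Φ (t - s, γ (t₀ + s))
        ((-1 : ℝ), (1 : ℝ) • X (γ (t₀ + s))) = (0 : E) := by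
      have ha : mfderiv ((𝓘(ℝ, ℝ)).prod 𝓘(ℝ, E)) 𝓘(ℝ, E) Φ (t - s, γ (t₀ + s))
          (((0 : ℝ), X (γ (t₀ + s)))) = X (Φ (t - s, γ (t₀ + s))) := hΦ.mfderiv_snd hX memD
      have hb : mfderiv ((𝓘(ℝ, ℝ)).prod 𝓘(ℝ, E)) 𝓘(ℝ, E) Φ (t - s, γ (t₀ + s))
          (((1 : ℝ), (0 : E))) = X (Φ (t - s, γ (t₀ + s))) := hΦ.mfderiv_fst hX memD
      have hc' : mfderiv ((𝓘(ℝ, ℝ)).prod 𝓘(ℝ, E)) 𝓘(ℝ, E) Φ (t - s, γ (t₀ + s))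
          ((-1 : ℝ), (1 : ℝ) • X (γ (t₀ + s)))
          = mfderiv ((𝓘(ℝ, ℝ)).prod 𝓘(ℝ, E)) 𝓘(ℝ, E) Φ (t - s, γ (t₀ + s))
            (((0 : ℝ), X (γ (t₀ + s))))
          - mfderiv ((𝓘(ℝ, ℝ)).prod 𝓘(ℝ, E)) 𝓘(ℝ, E) Φ (t - s, γ (t₀ + s))
            (((1 : ℝ), (0 : E))) := by
        have hv : (((-1 : ℝ), (1 : ℝ) • X (γ (t₀ + s))) : ℝ × E)
            = (((0 : ℝ), X (γ (t₀ + s))) : ℝ × E) - ((1 : ℝ), (0 : E)) := by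
          ext <;> simp <;> exact (sub_zero _).symm
        exact (congrArg _ hv).trans (map_sub _ _ _)
      rw [hc', ha, hb, sub_self]; rfl
    have hzero : (mfderiv ((𝓘(ℝ, ℝ)).prod 𝓘(ℝ, E)) 𝓘(ℝ, E) Φ (t - s, γ (t₀ + s))).comp
        ((-(ContinuousLinearMap.id ℝ ℝ)).prod ((1 : ℝ →L[ℝ] ℝ).smulRight (X (γ (t₀ + s)))))
        = 0 := ContinuousLinearMap.ext_ring (by exact e2)
    replace hcomp := hcomp.congr_mfderiv hzero
    exact hcomp
  have habs : ∀ s ∈ Icc (min 0 t) (max 0 t), |s| ≤ |t| := by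
    intro s hs
    rcases le_total 0 t with h | h
    · rw [min_eq_left h, max_eq_right h] at hs
      rw [abs_of_nonneg hs.1, abs_of_nonneg h]; exact hs.2
    · rw [min_eq_right h, max_eq_left h] at hs
      rw [abs_of_nonpos (hs.2.trans (le_refl 0)), abs_of_nonpos h]
      exact neg_le_neg hs.1
  have key : g t = g 0 := by
    rcases le_total 0 t with h | h
    · have := const_of_zero_mfderiv (a := 0) (b := t) h (fun s hs => hgderiv s (habs s (by
        rwa [min_eq_left h, max_eq_right h])))
      exact this
    · exact (const_of_zero_mfderiv (a := t) (b := 0) h (fun s hs => hgderiv s (habs s (by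
        rwa [min_eq_right h, max_eq_left h])))).symm
  have hgt : g t = γ (t₀ + t) := by
    show Φ (t - t, γ (t₀ + t)) = γ (t₀ + t)
    rw [sub_self, hΦ.map_zero]
  have hg0 : g 0 = Φ (t, p) := by
    show Φ (t - 0, γ (t₀ + 0)) = Φ (t, p)
    rw [sub_zero, add_zero]
  rw [← hgt, key, hg0]

/-- Short-time inversion of the flow. -/
theorem IsLocalFlow.eventually_inv (x : M) :
    ∀ᶠ s in 𝓝 (0 : ℝ), Φ (-s, Φ (s, x)) = x := by
  have hmz : Φ (0, x) = x := hΦ.map_zero x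
  have hev1 : ∀ᶠ s in 𝓝 (0 : ℝ), (s, x) ∈ D := by
    have hc : ContinuousAt (fun s => ((s : ℝ), x)) 0 :=
      (continuous_id.prodMk continuous_const).continuousAt
    exact hc.preimage_mem_nhds (hΦ.isOpen_dom.mem_nhds (hΦ.zero_mem x))
  have hev2 : ∀ᶠ s in 𝓝 (0 : ℝ), (-s, Φ (s, x)) ∈ D := by
    have hc : ContinuousAt (fun s => ((-s : ℝ), Φ (s, x))) 0 :=
      (continuous_neg.continuousAt).prodMk (hX x).continuousAt
    refine hc.preimage_mem_nhds (hΦ.isOpen_dom.mem_nhds ?_)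
    simpa [hmz] using hΦ.zero_mem x
  filter_upwards [hev1, hev2] with s h1 h2
  have h3 : (s + -s, x) ∈ D := by simpa using hΦ.zero_mem x
  rw [hΦ.comp s (-s) x h1 h2 h3, add_neg_cancel, hmz]

end Identities

end Aux

/-- **Uniqueness of integral curves.** Let `Φ` be a smooth local flow on `D` with velocity
field `X`. Then (i) every flow line `t ↦ Φ (t, x)` is an integral curve of `X` on the slice
`I_x = {t | (t, x) ∈ D}`, and (ii) any two integral curves of `X` on an open interval `I`
containing `0` that agree at `0` coincide on `I`. -/
theorem local_flow_integral_curve_uniqueness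
    {E : Type*} [NormedAddCommGroup E] [NormedSpace ℝ E] [CompleteSpace E]
    {M : Type*} [TopologicalSpace M] [ChartedSpace E M]
    [IsManifold 𝓘(ℝ, E) (⊤ : ℕ∞) M]
    (Φ : ℝ × M → M) (D : Set (ℝ × M)) (hΦ : IsLocalFlow (E := E) Φ D)
    (X : (x : M) → TangentSpace 𝓘(ℝ, E) x) (hX : IsVelocityField X Φ) :
    (∀ x : M, OldIsIntegralCurveOn (fun t => Φ (t, x)) X {t : ℝ | (t, x) ∈ D}) ∧
    (∀ I : Set ℝ, IsOpen I → I.OrdConnected → (0 : ℝ) ∈ I →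
      ∀ γ η : ℝ → M, OldIsIntegralCurveOn γ X I → OldIsIntegralCurveOn η X I →
        γ 0 = η 0 → Set.EqOn γ η I) := by
  constructor
  · exact fun x => hΦ.isIntegralCurveOn hX x
  · intro I hIopen hIconn hI0 γ η hγ hη h0
    set S := {t : ℝ | t ∈ I ∧ γ t = η t} with hS
    -- transporting the local flow description to a neighbourhood of any `t ∈ I`
    have key : ∀ t ∈ I, ∀ᶠ r in 𝓝 t, γ r = Φ (r - t, γ t) ∧ η r = Φ (r - t, η t) ∧
        Φ (-(r - t), Φ (r - t, γ t)) = γ t ∧ Φ (-(r - t), Φ (r - t, η t)) = η t ∧ r ∈ I := by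
      intro t ht
      have tends : Filter.Tendsto (fun r : ℝ => r - t) (𝓝 t) (𝓝 0) := by
        have := ((continuous_sub_right t).tendsto t)
        simpa using this
      have h1 := tends.eventually (hΦ.eventually_eq_flow hX hIopen hγ ht)
      have h2 := tends.eventually (hΦ.eventually_eq_flow hX hIopen hη ht)
      have h3 := tends.eventually (hΦ.eventually_inv hX (γ t))
      have h4 := tends.eventually (hΦ.eventually_inv hX (η t))
      have h5 : ∀ᶠ r in 𝓝 t, r ∈ I := hIopen.mem_nhds ht
      filter_upwards [h1, h2, h3, h4, h5] with r e1 e2 e3 e4 e5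
      rw [add_sub_cancel] at e1 e2
      exact ⟨e1, e2, e3, e4, e5⟩
    -- `S` is open
    have hSopen : IsOpen S := by
      rw [isOpen_iff_mem_nhds]
      rintro t ⟨htI, htEq⟩
      filter_upwards [key t htI] with r ⟨e1, e2, _, _, e5⟩
      exact ⟨e5, by rw [e1, e2, htEq]⟩
    -- closure property
    have hclos : closure S ∩ I ⊆ S := by
      rintro t ⟨htc, htI⟩
      have hne : (𝓝[S] t).NeBot := mem_closure_iff_nhdsWithin_neBot.mp htc
      have hev : ∀ᶠ r in 𝓝[S] t, (γ r = Φ (r - t, γ t) ∧ η r = Φ (r - t, η t) ∧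
          Φ (-(r - t), Φ (r - t, γ t)) = γ t ∧ Φ (-(r - t), Φ (r - t, η t)) = η t ∧ r ∈ I)
          ∧ r ∈ S :=
        (eventually_nhdsWithin_of_eventually_nhds (key t htI)).and eventually_mem_nhdsWithin
      obtain ⟨r, ⟨e1, e2, e3, e4, _⟩, hrS⟩ := hev.exists
      have : Φ (r - t, γ t) = Φ (r - t, η t) := by rw [← e1, ← e2]; exact hrS.2
      refine ⟨htI, ?_⟩
      rw [← e3, this, e4]
    -- conclude by preconnectedness
    have hsub : I ⊆ S := by
      refine hIconn.isPreconnected.subset_of_closure_inter_subset hSopen ⟨0, hI0, hI0, h0⟩ ?_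
      exact hclos
    exact fun t ht => (hsub ht).2
end

section
/- Let M be a smooth manifold without boundary modeled on a real Banach space, X a smooth locally integrable vector field on M, and Φ : 𝒟_X → M its maximal local flow. For t ∈ ℝ set M_t := {x ∈ M : (t,x) ∈ 𝒟_X}. Then each M_t is open in M, the map Φ_t := Φ(t, ·) maps M_t bijectively onto M_{−t}, its inverse is Φ_{−t} : M_{−t} → M_t, and Φ_t : M_t → M_{−t} is a diffeomorphism (smooth with smooth inverse). -/
open scoped Manifold
open Set

section Aux

variable {E : Type*} [NormedAddCommGroup E] [NormedSpace ℝ E]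
    {M : Type*} [TopologicalSpace M] [ChartedSpace E M]
    {X : (x : M) → TangentSpace 𝓘(ℝ, E) x} {Φ : ℝ × M → M} {D : Set (ℝ × M)}

/-- Each flow line of a local flow with velocity field `X` is an integral curve of `X`. -/
lemma IsLocalFlow.flowline (hΦ : IsLocalFlow (E := E) Φ D) (hvel : IsVelocityField X Φ) (x : M) :
    ∀ t ∈ {s : ℝ | (s, x) ∈ D}, HasMFDerivAt 𝓘(ℝ, ℝ) 𝓘(ℝ, E) (fun s => Φ (s, x)) t
      ((1 : ℝ →L[ℝ] ℝ).smulRight (X (Φ (t, x)))) := by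
  intro s0 hs0
  have hsub : HasMFDerivAt 𝓘(ℝ, ℝ) 𝓘(ℝ, ℝ) (fun s : ℝ => s - s0) s0
      (ContinuousLinearMap.id ℝ ℝ) := by
    refine hasMFDerivAt_iff_hasFDerivAt.mpr ?_
    exact (hasFDerivAt_id (𝕜 := ℝ) s0).sub_const s0
  have hy' : HasMFDerivAt 𝓘(ℝ, ℝ) 𝓘(ℝ, E) (fun u => Φ (u, Φ (s0, x)))
      ((fun s : ℝ => s - s0) s0) ((1 : ℝ →L[ℝ] ℝ).smulRight (X (Φ (s0, x)))) := by
    show HasMFDerivAt 𝓘(ℝ, ℝ) 𝓘(ℝ, E) _ (s0 - s0) _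
    rw [sub_self]
    exact hvel (Φ (s0, x))
  have hcomp := HasMFDerivAt.comp (f := fun s : ℝ => s - s0) s0 hy' hsub
  refine HasMFDerivAt.congr_of_eventuallyEq hcomp ?_
  have h1 : ∀ᶠ s in nhds s0, (s - s0, Φ (s0, x)) ∈ D := by
    have hc : ContinuousAt (fun s : ℝ => ((s - s0, Φ (s0, x)) : ℝ × M)) s0 := by fun_prop
    have h0 : ((s0 - s0, Φ (s0, x)) : ℝ × M) ∈ D := by
      simpa using hΦ.zero_mem (Φ (s0, x))
    exact hc (hΦ.isOpen_dom.mem_nhds h0)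
  have h2 : ∀ᶠ s in nhds s0, ((s, x) : ℝ × M) ∈ D := by
    have hc : ContinuousAt (fun s : ℝ => ((s, x) : ℝ × M)) s0 := by fun_prop
    exact hc (hΦ.isOpen_dom.mem_nhds hs0)
  filter_upwards [h1, h2] with s hs1 hs2
  have h3 : ((s0 + (s - s0), x) : ℝ × M) ∈ D := by
    rw [show s0 + (s - s0) = s by ring]; exact hs2
  have := hΦ.comp s0 (s - s0) x hs0 hs1 h3
  simp only [Function.comp]
  rw [this, show s0 + (s - s0) = s by ring]

/-- Key lemma: for `(t, x) ∈ D`, the point `Φ (t, x)` can be flowed back. -/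
lemma IsLocalFlow.key (hΦ : IsLocalFlow (E := E) Φ D) (hvel : IsVelocityField X Φ)
    (hmax : ∀ (x : M) (I' : Set ℝ) (γ' : ℝ → M), IsOpen I' → I'.OrdConnected →
      (0 : ℝ) ∈ I' → γ' 0 = x → (∀ t ∈ I', HasMFDerivAt 𝓘(ℝ, ℝ) 𝓘(ℝ, E) γ' t ((1 : ℝ →L[ℝ] ℝ).smulRight (X (γ' t)))) →
      I' ⊆ {t : ℝ | (t, x) ∈ D} ∧ Set.EqOn γ' (fun t => Φ (t, x)) I')
    (t : ℝ) (x : M) (hx : (t, x) ∈ D) :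
    (-t, Φ (t, x)) ∈ D ∧ Φ (-t, Φ (t, x)) = x := by
  set I' : Set ℝ := {s : ℝ | (s + t, x) ∈ D} with hI'
  have hopen : IsOpen I' :=
    hΦ.isOpen_dom.preimage (by fun_prop : Continuous fun s : ℝ => ((s + t, x) : ℝ × M))
  have hord : I'.OrdConnected := ⟨fun a ha b hb c hc =>
    (hΦ.ordConnected_slice x).out ha hb ⟨by linarith [hc.1], by linarith [hc.2]⟩⟩
  have h0 : (0 : ℝ) ∈ I' := by simpa [hI'] using hx
  have hic : ∀ s ∈ I', HasMFDerivAt 𝓘(ℝ, ℝ) 𝓘(ℝ, E) (fun s => Φ (s + t, x)) s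
      ((1 : ℝ →L[ℝ] ℝ).smulRight (X (Φ (s + t, x)))) := by
    intro s hs
    have hadd : HasMFDerivAt 𝓘(ℝ, ℝ) 𝓘(ℝ, ℝ) (fun s : ℝ => s + t) s
        (ContinuousLinearMap.id ℝ ℝ) := by
      refine hasMFDerivAt_iff_hasFDerivAt.mpr ?_
      exact (hasFDerivAt_id (𝕜 := ℝ) s).add_const t
    exact ((hΦ.flowline hvel x) (s + t) hs).comp s hadd
  obtain ⟨hsubset, heq⟩ := hmax (Φ (t, x)) I' (fun s => Φ (s + t, x)) hopen hord h0
    (by simp) hic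
  have hmt : (-t : ℝ) ∈ I' := by simpa [hI'] using hΦ.zero_mem x
  refine ⟨hsubset hmt, ?_⟩
  have h := heq hmt
  simp only [neg_add_cancel] at h
  rw [← h, hΦ.map_zero]

end Aux

/-- For the maximal local flow `Φ : 𝒟_X → M` of a smooth locally integrable vector field
`X`, each set `M_t = {x | (t, x) ∈ 𝒟_X}` is open, `Φ_t = Φ (t, ·)` maps `M_t` bijectively
onto `M_{-t}` with inverse `Φ_{-t}`, and `Φ_t : M_t → M_{-t}` is a diffeomorphism
(smooth with smooth inverse). -/
theorem maximal_local_flow_time_t_diffeomorphism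
    {E : Type*} [NormedAddCommGroup E] [NormedSpace ℝ E] [CompleteSpace E]
    {M : Type*} [TopologicalSpace M] [ChartedSpace E M]
    [IsManifold 𝓘(ℝ, E) (⊤ : ℕ∞) M]
    (X : (x : M) → TangentSpace 𝓘(ℝ, E) x)
    (hX : ContMDiff 𝓘(ℝ, E) (𝓘(ℝ, E)).tangent (⊤ : ℕ∞)
      (fun x => (⟨x, X x⟩ : TangentBundle 𝓘(ℝ, E) M)))
    (Φ : ℝ × M → M) (D : Set (ℝ × M))
    (hΦ : IsLocalFlow (E := E) Φ D) (hvel : IsVelocityField X Φ)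
    -- the flow lines of `Φ` are the maximal integral curves of `X`
    (hmax : ∀ (x : M) (I' : Set ℝ) (γ' : ℝ → M), IsOpen I' → I'.OrdConnected →
      (0 : ℝ) ∈ I' → γ' 0 = x → (∀ t ∈ I', HasMFDerivAt 𝓘(ℝ, ℝ) 𝓘(ℝ, E) γ' t ((1 : ℝ →L[ℝ] ℝ).smulRight (X (γ' t)))) →
      I' ⊆ {t : ℝ | (t, x) ∈ D} ∧ Set.EqOn γ' (fun t => Φ (t, x)) I') :
    ∀ t : ℝ,
      IsOpen {x : M | (t, x) ∈ D} ∧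
      Set.BijOn (fun x => Φ (t, x)) {x : M | (t, x) ∈ D} {x : M | (-t, x) ∈ D} ∧
      (∀ x ∈ {x : M | (t, x) ∈ D}, Φ (-t, Φ (t, x)) = x) ∧
      (∀ y ∈ {x : M | (-t, x) ∈ D}, Φ (t, Φ (-t, y)) = y) ∧
      ContMDiffOn 𝓘(ℝ, E) 𝓘(ℝ, E) (⊤ : ℕ∞) (fun x => Φ (t, x)) {x : M | (t, x) ∈ D} ∧
      ContMDiffOn 𝓘(ℝ, E) 𝓘(ℝ, E) (⊤ : ℕ∞) (fun x => Φ (-t, x)) {x : M | (-t, x) ∈ D} := by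
  intro t
  have hopen : ∀ s : ℝ, IsOpen {x : M | (s, x) ∈ D} := fun s =>
    hΦ.isOpen_dom.preimage (by fun_prop : Continuous fun x : M => ((s, x) : ℝ × M))
  have hkey : ∀ (s : ℝ) (x : M), (s, x) ∈ D →
      (-s, Φ (s, x)) ∈ D ∧ Φ (-s, Φ (s, x)) = x := fun s x h =>
    hΦ.key hvel hmax s x h
  have hsmooth : ∀ s : ℝ,
      ContMDiffOn 𝓘(ℝ, E) 𝓘(ℝ, E) (⊤ : ℕ∞) (fun x => Φ (s, x)) {x : M | (s, x) ∈ D} := by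
    intro s
    have h1 : ContMDiff 𝓘(ℝ, E) ((𝓘(ℝ, ℝ)).prod 𝓘(ℝ, E)) (⊤ : ℕ∞)
        (fun x : M => ((s, x) : ℝ × M)) := contMDiff_const.prodMk contMDiff_id
    exact hΦ.smoothOn.comp h1.contMDiffOn (fun x hx => hx)
  refine ⟨hopen t, ⟨fun x hx => (hkey t x hx).1, ?_, ?_⟩,
    fun x hx => (hkey t x hx).2, fun y hy => ?_, hsmooth t, hsmooth (-t)⟩
  · -- injective
    intro a ha b hb hab
    have h1 := (hkey t a ha).2
    have h2 := (hkey t b hb).2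
    simp only at hab
    rw [← h1, hab, h2]
  · -- surjective
    intro y hy
    have hk := hkey (-t) y hy
    rw [neg_neg] at hk
    exact ⟨Φ (-t, y), hk.1, hk.2⟩
  · -- right inverse
    have hk := hkey (-t) y hy
    rw [neg_neg] at hk
    exact hk.2
end

section
/- (Lie derivative equals Lie bracket.) Let E be a real Banach space, U ⊆ E an open set, and X : U → E a smooth vector field which is the velocity field of a smooth local flow Φ : 𝒟 → U. Let Y : U → E be a smooth vector field and p ∈ U. Then for t in a neighborhood of 0 the vector c(t) := (DΦ_{−t})(Φ_t(p)) (Y(Φ_t(p))) is defined (where DΦ_{−t} denotes the Fréchet derivative of the map Φ_{−t} = Φ(−t, ·)), and the curve c is differentiable at t = 0 with derivative c'(0) = [X,Y](p) := DY(p)(X(p)) − DX(p)(Y(p)). -/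
set_option maxHeartbeats 1000000 in
open Topology Filter ContinuousLinearMap in
/-- **Lie derivative equals Lie bracket.** Let `U` be an open subset of a real Banach space
`E`, let `X : U → E` be a smooth vector field which is the velocity field of a smooth local
flow `Φ : D → U`, and let `Y : U → E` be a smooth vector field. Then for every `p ∈ U` and
all `t` near `0` the vector `c t := (DΦ_{-t})(Φ_t p)(Y (Φ_t p))` is defined, and `c` is
differentiable at `t = 0` with `c' 0 = [X, Y](p) = DY(p)(X p) - DX(p)(Y p)`. -/
theorem lie_derivative_eq_bracket
    {E : Type*} [NormedAddCommGroup E] [NormedSpace ℝ E] [CompleteSpace E]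
    (U : Set E) (hU : IsOpen U)
    (X Y : E → E) (hX : ContDiffOn ℝ (⊤ : ℕ∞) X U) (hY : ContDiffOn ℝ (⊤ : ℕ∞) Y U)
    (Φ : ℝ × E → E) (D : Set (ℝ × E))
    (hD : IsOpen D) (hDU : ∀ p ∈ D, Prod.snd p ∈ U) (hmaps : ∀ p ∈ D, Φ p ∈ U)
    (hzero : ∀ x ∈ U, ((0 : ℝ), x) ∈ D)
    (hconn : ∀ x : E, Set.OrdConnected {t : ℝ | (t, x) ∈ D})
    (hsmooth : ContDiffOn ℝ (⊤ : ℕ∞) Φ D)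
    (hid : ∀ x ∈ U, Φ (0, x) = x)
    (hcomp : ∀ (s t : ℝ) (x : E), (s, x) ∈ D → (t, Φ (s, x)) ∈ D → (s + t, x) ∈ D →
      Φ (t, Φ (s, x)) = Φ (s + t, x))
    (hvel : ∀ x ∈ U, HasDerivAt (fun t => Φ (t, x)) (X x) 0)
    (p : E) (hp : p ∈ U) :
    ∃ δ > (0 : ℝ),
      (∀ t : ℝ, |t| < δ → (t, p) ∈ D ∧ (-t, Φ (t, p)) ∈ D ∧
        DifferentiableWithinAt ℝ (fun x => Φ (-t, x)) {x : E | (-t, x) ∈ D} (Φ (t, p))) ∧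
      HasDerivAt
        (fun t : ℝ =>
          fderivWithin ℝ (fun x => Φ (-t, x)) {x : E | (-t, x) ∈ D} (Φ (t, p))
            (Y (Φ (t, p))))
        (fderivWithin ℝ Y U p (X p) - fderivWithin ℝ X U p (Y p)) 0 := by
  have h0p : ((0:ℝ), p) ∈ D := hzero p hp
  set H : ℝ × E → (ℝ × E →L[ℝ] E) := fderiv ℝ Φ with hHdef
  have hΦdiff : ∀ q ∈ D, HasFDerivAt Φ (H q) q := fun q hq =>
    (((hsmooth q hq).differentiableWithinAt (by simp)).differentiableAt
      (hD.mem_nhds hq)).hasFDerivAt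
  have hHsm : ContDiffOn ℝ 1 H D := hsmooth.fderiv_of_isOpen hD (WithTop.coe_le_coe.mpr le_top)
  have hL : HasFDerivAt H (fderiv ℝ H ((0:ℝ),p)) ((0:ℝ),p) :=
    (((hHsm _ h0p).differentiableWithinAt one_ne_zero).differentiableAt
      (hD.mem_nhds h0p)).hasFDerivAt
  set L := fderiv ℝ H ((0:ℝ),p) with hLdef
  -- partial derivative in x
  have hpart : ∀ q ∈ D, HasFDerivAt (fun x => Φ (q.1, x))
      ((H q).comp (inr ℝ ℝ E)) q.2 := fun q hq =>
    (hΦdiff q hq).comp q.2 (hasFDerivAt_prodMk_right q.1 q.2)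
  -- X as t-partial
  have hkey : ∀ x ∈ U, (H ((0:ℝ),x)) (1,0) = X x := by
    intro x hx
    have h1 : HasDerivAt (fun t => Φ (t,x)) ((H ((0:ℝ),x)) (1,0)) 0 :=
      (hΦdiff ((0:ℝ),x) (hzero x hx)).comp_hasDerivAt 0
        ((hasDerivAt_id (0:ℝ)).prodMk (hasDerivAt_const 0 x))
    exact h1.unique (hvel x hx)
  -- identity of partial at time 0
  have hid' : ∀ x ∈ U, (H ((0:ℝ),x)).comp (inr ℝ ℝ E) = ContinuousLinearMap.id ℝ E := by
    intro x hx
    have h1 : HasFDerivAt (fun y => Φ ((0:ℝ), y)) ((H ((0:ℝ),x)).comp (inr ℝ ℝ E)) x :=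
      hpart ((0:ℝ),x) (hzero x hx)
    have h2 : HasFDerivAt (fun y => Φ ((0:ℝ), y)) (ContinuousLinearMap.id ℝ E) x := by
      apply (hasFDerivAt_id x).congr_of_eventuallyEq
      filter_upwards [hU.mem_nhds hx] with y hy using (hid y hy)
    exact h1.unique h2
  have hXder : HasFDerivAt X (fderiv ℝ X p) p :=
    (((hX p hp).differentiableWithinAt (by simp)).differentiableAt (hU.mem_nhds hp)).hasFDerivAt
  have hYder : HasFDerivAt Y (fderiv ℝ Y p) p :=
    (((hY p hp).differentiableWithinAt (by simp)).differentiableAt (hU.mem_nhds hp)).hasFDerivAt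
  -- derivative of x ↦ H (0, x)
  have hg : HasFDerivAt (fun x => H ((0:ℝ), x)) (L.comp (inr ℝ ℝ E)) p :=
    hL.comp p (hasFDerivAt_prodMk_right (0:ℝ) p)
  -- claim 1 : L (0,v) (1,0) = DX p v
  have claim1 : ∀ v : E, L ((0:ℝ), v) ((1:ℝ),(0:E)) = fderiv ℝ X p v := by
    set ev1 : (ℝ × E →L[ℝ] E) →L[ℝ] E := ContinuousLinearMap.apply ℝ E ((1:ℝ),(0:E)) with hev1
    have hg1 : HasFDerivAt (fun x => (H ((0:ℝ),x)) ((1:ℝ),(0:E))) (ev1.comp (L.comp (inr ℝ ℝ E))) p :=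
      ev1.hasFDerivAt.comp p hg
    have hg2 : HasFDerivAt (fun x => (H ((0:ℝ),x)) ((1:ℝ),(0:E))) (fderiv ℝ X p) p := by
      apply hXder.congr_of_eventuallyEq
      filter_upwards [hU.mem_nhds hp] with x hx using (hkey x hx)
    have h := hg1.unique hg2
    intro v
    have : (ev1.comp (L.comp (inr ℝ ℝ E))) v = L ((0:ℝ), v) ((1:ℝ),(0:E)) := rfl
    rw [← this, h]
  -- Rc : precomposition with inr
  set Rc : (ℝ × E →L[ℝ] E) →L[ℝ] (E →L[ℝ] E) :=
    (ContinuousLinearMap.compL ℝ E (ℝ × E) E).flip (inr ℝ ℝ E) with hRc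
  have hRcApp : ∀ (T : ℝ × E →L[ℝ] E) (w : E), Rc T w = T ((0:ℝ), w) := fun T w => rfl
  -- claim 2 : L (0,v) (0,w) = 0
  have claim2 : ∀ v w : E, L ((0:ℝ), v) ((0:ℝ), w) = 0 := by
    have hg3 : HasFDerivAt (fun x => Rc (H ((0:ℝ),x))) (Rc.comp (L.comp (inr ℝ ℝ E))) p :=
      Rc.hasFDerivAt.comp p hg
    have hg4 : HasFDerivAt (fun x => Rc (H ((0:ℝ),x))) (0 : E →L[ℝ] (E →L[ℝ] E)) p := by
      have hconst : HasFDerivAt (fun _ : E => ContinuousLinearMap.id ℝ E)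
          (0 : E →L[ℝ] (E →L[ℝ] E)) p := hasFDerivAt_const _ _
      apply hconst.congr_of_eventuallyEq
      filter_upwards [hU.mem_nhds hp] with x hx
      show Rc (H ((0:ℝ),x)) = ContinuousLinearMap.id ℝ E
      ext w
      rw [hRcApp]
      have := congrArg (fun (T : E →L[ℝ] E) => T w) (hid' x hx)
      simpa using this
    have h := hg3.unique hg4
    intro v w
    have h1 : (Rc.comp (L.comp (inr ℝ ℝ E))) v = (0 : E →L[ℝ] E) := by rw [h]; rfl
    have h2 : (Rc.comp (L.comp (inr ℝ ℝ E))) v w = L ((0:ℝ), v) ((0:ℝ), w) := rfl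
    rw [← h2, h1]; rfl
  -- symmetry of the second derivative
  have hsymm : ∀ a b : ℝ × E, L a b = L b a := by
    intro a b
    apply second_derivative_symmetric_of_eventually (f := Φ) _ hL a b
    filter_upwards [hD.mem_nhds h0p] with q hq using hΦdiff q hq
  -- neighborhood where everything is defined
  have hΦc : ContinuousAt Φ ((0:ℝ),p) :=
    (hsmooth.continuousOn ((0:ℝ),p) h0p).continuousAt (hD.mem_nhds h0p)
  have hin : ContinuousAt (fun t : ℝ => ((t : ℝ), p)) 0 :=
    (continuous_id.prodMk continuous_const).continuousAt
  have hγc : ContinuousAt (fun t : ℝ => Φ (t, p)) 0 := ContinuousAt.comp hΦc hin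
  have hev : ∀ᶠ t : ℝ in 𝓝 0, (t, p) ∈ D ∧ (-t, Φ (t, p)) ∈ D := by
    have e1 : ∀ᶠ t : ℝ in 𝓝 0, (t, p) ∈ D :=
      (continuous_id.prodMk continuous_const).continuousAt.preimage_mem_nhds
        (hD.mem_nhds h0p)
    have hc2 : ContinuousAt (fun t : ℝ => ((-t : ℝ), Φ (t, p))) 0 :=
      (continuous_neg.continuousAt).prodMk hγc
    have e2 : ∀ᶠ t : ℝ in 𝓝 0, ((-t : ℝ), Φ (t, p)) ∈ D := by
      apply hc2.preimage_mem_nhds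
      rw [show ((-(0:ℝ)), Φ ((0:ℝ), p)) = ((0:ℝ), p) by rw [neg_zero, hid p hp]] at *
      simpa [hid p hp] using hD.mem_nhds h0p
    exact e1.and e2
  -- the nice formula, valid on the good set
  have hgood : ∀ t : ℝ, (t, p) ∈ D → (-t, Φ (t, p)) ∈ D →
      DifferentiableWithinAt ℝ (fun x => Φ (-t, x)) {x : E | (-t, x) ∈ D} (Φ (t, p)) ∧
      fderivWithin ℝ (fun x => Φ (-t, x)) {x : E | (-t, x) ∈ D} (Φ (t, p))
        = (H (-t, Φ (t, p))).comp (inr ℝ ℝ E) := by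
    intro t ht1 ht2
    have hSopen : IsOpen {x : E | (-t, x) ∈ D} :=
      hD.preimage (continuous_const.prodMk continuous_id)
    have hfd : HasFDerivAt (fun x => Φ (-t, x)) ((H (-t, Φ (t,p))).comp (inr ℝ ℝ E)) (Φ (t,p)) :=
      hpart (-t, Φ (t,p)) ht2
    refine ⟨hfd.differentiableAt.differentiableWithinAt, ?_⟩
    rw [fderivWithin_of_mem_nhds (hSopen.mem_nhds ht2), hfd.fderiv]
  -- the model curve and its derivative
  have hκ : HasDerivAt (fun t : ℝ => ((-t : ℝ), Φ (t, p))) (((-1:ℝ), X p)) 0 :=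
    ((hasDerivAt_id (0:ℝ)).neg).prodMk (hvel p hp)
  have hL' : HasFDerivAt H L ((-(0:ℝ)), Φ ((0:ℝ), p)) := by
    rw [neg_zero, hid p hp]; exact hL
  have hB : HasDerivAt (fun t : ℝ => H ((-t : ℝ), Φ (t, p))) (L ((-1:ℝ), X p)) 0 :=
    hL'.comp_hasDerivAt 0 hκ
  have hA : HasDerivAt (fun t : ℝ => Rc (H ((-t : ℝ), Φ (t, p)))) (Rc (L ((-1:ℝ), X p))) 0 :=
    Rc.hasFDerivAt.comp_hasDerivAt 0 hB
  have hYder' : HasFDerivAt Y (fderiv ℝ Y p) (Φ ((0:ℝ), p)) := by rw [hid p hp]; exact hYder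
  have hv : HasDerivAt (fun t : ℝ => Y (Φ (t, p))) (fderiv ℝ Y p (X p)) 0 :=
    hYder'.comp_hasDerivAt 0 (hvel p hp)
  have hc : HasDerivAt (fun t : ℝ => Rc (H ((-t : ℝ), Φ (t, p))) (Y (Φ (t, p))))
      (Rc (L ((-1:ℝ), X p)) (Y (Φ ((0:ℝ), p)))
        + Rc (H ((-(0:ℝ)), Φ ((0:ℝ), p))) (fderiv ℝ Y p (X p))) 0 :=
    hA.clm_apply hv
  -- compute the derivative value
  have hval : Rc (L ((-1:ℝ), X p)) (Y (Φ ((0:ℝ), p)))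
        + Rc (H ((-(0:ℝ)), Φ ((0:ℝ), p))) (fderiv ℝ Y p (X p))
      = fderivWithin ℝ Y U p (X p) - fderivWithin ℝ X U p (Y p) := by
    rw [neg_zero, hid p hp, hRcApp, hRcApp]
    have hsplit : ((-1:ℝ), X p) = -(((1:ℝ),(0:E))) + (((0:ℝ), X p)) := by
      simp [Prod.ext_iff]
    rw [hsplit, map_add, map_neg, ContinuousLinearMap.add_apply, ContinuousLinearMap.neg_apply]
    rw [hsymm ((1:ℝ),(0:E)) ((0:ℝ), Y p), claim1 (Y p), claim2 (X p) (Y p)]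
    have hHp : (H ((0:ℝ), p)) ((0:ℝ), fderiv ℝ Y p (X p)) = fderiv ℝ Y p (X p) := by
      have := congrArg (fun (T : E →L[ℝ] E) => T (fderiv ℝ Y p (X p))) (hid' p hp)
      simpa using this
    rw [hHp, fderivWithin_of_mem_nhds (hU.mem_nhds hp), fderivWithin_of_mem_nhds (hU.mem_nhds hp)]
    abel
  -- extract δ
  rcases Metric.eventually_nhds_iff.1 hev with ⟨δ, hδ, hball⟩
  refine ⟨δ, hδ, ?_, ?_⟩
  · intro t ht
    have h := hball (show dist t 0 < δ by rw [Real.dist_eq, sub_zero]; exact ht)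
    exact ⟨h.1, h.2, (hgood t h.1 h.2).1⟩
  · rw [← hval]
    apply hc.congr_of_eventuallyEq
    filter_upwards [hev] with t ht
    rw [(hgood t ht.1 ht.2).2, hRcApp]
    rfl
end

section
/- (Transformation of vector fields under flows via the adjoint representation.) Let E be a real Banach space, U ⊆ E an open set, and 𝔤 a Banach–Lie algebra, i.e. a real Banach space carrying a Lie algebra structure whose bracket is continuous (there is C ≥ 0 with ‖⁅x,y⁆‖ ≤ C‖x‖‖y‖). Let β : 𝔤 → C^∞(U, E) be a linear map into smooth vector fields on U which is a homomorphism into the Lie algebra of vector fields, i.e. β(⁅x,y⁆)(m) = D(β(y))(m)(β(x)(m)) − D(β(x))(m)(β(y)(m)) for all x, y ∈ 𝔤 and m ∈ U, and such that the map 𝔤 × U → E, (x,m) ↦ β(x)(m), is smooth. Fix x ∈ 𝔤 such that the vector field β(x) is locally integrable, with maximal local flow Φ^x defined on the open set 𝒟 ⊆ ℝ × U, and set M_t := {m ∈ U : (t,m) ∈ 𝒟}. Then for all y ∈ 𝔤, all t ∈ ℝ, and all m ∈ M_t one has β(exp(t · ad x) y)(m) = D(Φ^x_{−t})(Φ^x_t(m))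 (β(y)(Φ^x_t(m))), where ad x : 𝔤 → 𝔤 is the continuous linear map y ↦ ⁅x,y⁆ and exp denotes the operator exponential in the Banach algebra of continuous linear endomorphisms of 𝔤. -/
open Topology

set_option maxHeartbeats 2000000
set_option synthInstance.maxHeartbeats 400000

section aux
variable {G E : Type*} [NormedAddCommGroup G] [NormedSpace ℝ G]
  [NormedAddCommGroup E] [NormedSpace ℝ E]

/-- A map which is linear and has a derivative at one point equals that derivative. -/
lemma linear_eq_hasFDerivAt {f : G → E}
    (hadd : ∀ a b, f (a + b) = f a + f b) (hsmul : ∀ (r : ℝ) a, f (r • a) = r • f a)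
    {L : G →L[ℝ] E} {c : G} (h : HasFDerivAt f L c) (z : G) : f z = L z := by
  have hcurve : HasDerivAt (fun ε : ℝ => c + ε • z) z 0 := by
    simpa using ((hasDerivAt_id (0 : ℝ)).smul_const z).const_add c
  have h1 : HasDerivAt (fun ε : ℝ => f (c + ε • z)) (L z) 0 := by
    have h' : HasFDerivAt f L (c + (0 : ℝ) • z) := by simpa using h
    simpa [Function.comp_def] using h'.comp_hasDerivAt 0 hcurve
  have h2 : HasDerivAt (fun ε : ℝ => f c + ε • f z) (f z) 0 := by
    simpa using ((hasDerivAt_id (0 : ℝ)).smul_const (f z)).const_add (f c)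
  have heq : (fun ε : ℝ => f (c + ε • z)) = fun ε => f c + ε • f z := by
    funext ε; rw [hadd, hsmul]
  rw [heq] at h1
  exact h2.unique h1
end aux


/-- **Transformation of vector fields under flows via the adjoint representation.**
Let `𝔤` be a Banach–Lie algebra (with continuous bracket), `U` an open subset of a real
Banach space `E`, and `β : 𝔤 → 𝒱(U)` a homomorphism of Lie algebras into smooth vector
fields on `U` such that `(x, m) ↦ β x m` is smooth. If `x ∈ 𝔤` is such that `β x` is
locally integrable with maximal local flow `Φ` on the open set `D`, then for all `y ∈ 𝔤`,
`t ∈ ℝ` and `m ∈ M_t = {m | (t, m) ∈ D}` one has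
`β (exp (t • ad x) y) m = D(Φ_{-t})(Φ_t m)(β y (Φ_t m))`. -/
theorem vector_field_transformation_adjoint
    {E : Type*} [NormedAddCommGroup E] [NormedSpace ℝ E] [CompleteSpace E]
    {𝔤 : Type*} [NormedAddCommGroup 𝔤] [NormedSpace ℝ 𝔤] [CompleteSpace 𝔤]
    [LieRing 𝔤] [LieAlgebra ℝ 𝔤]
    (hbracket : ∃ C : ℝ, 0 ≤ C ∧ ∀ x y : 𝔤, ‖⁅x, y⁆‖ ≤ C * ‖x‖ * ‖y‖)
    (U : Set E) (hU : IsOpen U)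
    (β : @LinearMap ℝ ℝ _ _ (RingHom.id ℝ) 𝔤 (E → E)
      NormedAddCommGroup.toAddCommGroup.toAddCommMonoid _ NormedSpace.toModule _)
    (hβsmooth : ContDiffOn ℝ (⊤ : ℕ∞) (fun q : 𝔤 × E => β q.1 q.2) (Set.univ ×ˢ U))
    (hβhom : ∀ x y : 𝔤, ∀ m ∈ U, β ⁅x, y⁆ m =
      fderivWithin ℝ (β y) U m (β x m) - fderivWithin ℝ (β x) U m (β y m))
    (x : 𝔤)
    (adx : @ContinuousLinearMap ℝ ℝ _ _ (RingHom.id ℝ) 𝔤 _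
      NormedAddCommGroup.toAddCommGroup.toAddCommMonoid 𝔤 _
      NormedAddCommGroup.toAddCommGroup.toAddCommMonoid NormedSpace.toModule NormedSpace.toModule) (hadx : ∀ y : 𝔤, adx y = ⁅x, y⁆)
    -- `Φ` is a smooth local flow on the open set `D ⊆ ℝ × U` ...
    (Φ : ℝ × E → E) (D : Set (ℝ × E))
    (hD : IsOpen D) (hDU : ∀ p ∈ D, Prod.snd p ∈ U) (hmaps : ∀ p ∈ D, Φ p ∈ U)
    (hzero : ∀ m ∈ U, ((0 : ℝ), m) ∈ D)
    (hconn : ∀ m : E, Set.OrdConnected {t : ℝ | (t, m) ∈ D})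
    (hsmooth : ContDiffOn ℝ (⊤ : ℕ∞) Φ D)
    (hid : ∀ m ∈ U, Φ (0, m) = m)
    (hcomp : ∀ (s t : ℝ) (m : E), (s, m) ∈ D → (t, Φ (s, m)) ∈ D → (s + t, m) ∈ D →
      Φ (t, Φ (s, m)) = Φ (s + t, m))
    -- ... whose velocity field is `β x` ...
    (hvel : ∀ m ∈ U, HasDerivAt (fun t => Φ (t, m)) (β x m) 0)
    -- ... and which is maximal: every integral curve of `β x` is a restriction of a flow line
    (hmax : ∀ m ∈ U, ∀ (I' : Set ℝ) (γ' : ℝ → E), IsOpen I' → I'.OrdConnected →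
      (0 : ℝ) ∈ I' → γ' 0 = m → (∀ t ∈ I', γ' t ∈ U) →
      (∀ t ∈ I', HasDerivAt γ' (β x (γ' t)) t) →
      I' ⊆ {t : ℝ | (t, m) ∈ D} ∧ Set.EqOn γ' (fun t => Φ (t, m)) I') :
    ∀ (y : 𝔤) (t : ℝ), ∀ m : E, (t, m) ∈ D →
      DifferentiableWithinAt ℝ (fun u => Φ (-t, u)) {u : E | (-t, u) ∈ D} (Φ (t, m)) ∧
      β (NormedSpace.exp (t • adx) y) m =
        fderivWithin ℝ (fun u => Φ (-t, u)) {u : E | (-t, u) ∈ D} (Φ (t, m))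
          (β y (Φ (t, m))) := by
  letI : AddCommGroup 𝔤 := NormedAddCommGroup.toAddCommGroup
  -- vector fields β z are C² on U
  have hβ2 : ContDiffOn ℝ 2 (fun q : 𝔤 × E => β q.1 q.2) (Set.univ ×ˢ U) :=
    hβsmooth.of_le (WithTop.coe_le_coe.mpr le_top)
  have hUopen : IsOpen ((Set.univ : Set 𝔤) ×ˢ U) := isOpen_univ.prod hU
  have hXsm : ∀ (z : 𝔤), ∀ u ∈ U, ContDiffAt ℝ 2 (fun v => β z v) u := by
    intro z u hu
    have h1 : ContDiffAt ℝ 2 (fun q : 𝔤 × E => β q.1 q.2) (z, u) :=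
      hβ2.contDiffAt (hUopen.mem_nhds ⟨trivial, hu⟩)
    exact h1.comp u ((contDiff_const.prodMk contDiff_id).contDiffAt)
  have hΦ2 : ContDiffOn ℝ 2 Φ D := hsmooth.of_le (WithTop.coe_le_coe.mpr le_top)
  have hΦat : ∀ q ∈ D, ContDiffAt ℝ 2 Φ q := fun q hq => hΦ2.contDiffAt (hD.mem_nhds hq)
  -- Fact 1: the velocity field of the flow is β x everywhere on D
  have fact1 : ∀ s u, (s, u) ∈ D → HasDerivAt (fun τ => Φ (τ, u)) (β x (Φ (s, u))) s := by
    intro s u hsu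
    have hΦsu : Φ (s, u) ∈ U := hmaps _ hsu
    have h0 : HasDerivAt (fun τ => Φ (τ, Φ (s, u))) (β x (Φ (s, u))) 0 := hvel _ hΦsu
    have hc : HasDerivAt (fun τ : ℝ => τ - s) 1 s := by
      simpa using (hasDerivAt_id s).sub_const s
    have hshift : HasDerivAt (fun τ => Φ (τ - s, Φ (s, u))) (β x (Φ (s, u))) s := by
      simpa [Function.comp_def] using HasDerivAt.scomp_of_eq (hg := h0) (hh := hc) (hy := (sub_self s).symm)
    have h1 : ∀ᶠ τ in 𝓝 s, (τ - s, Φ (s, u)) ∈ D := by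
      have hco : ContinuousAt (fun τ : ℝ => ((τ - s, Φ (s, u)) : ℝ × E)) s := by fun_prop
      have h0D : ((0 : ℝ), Φ (s, u)) ∈ D := hzero _ hΦsu
      exact hco.eventually_mem (hD.mem_nhds (by simpa using h0D))
    have h2 : ∀ᶠ τ in 𝓝 s, (τ, u) ∈ D := by
      have hco : ContinuousAt (fun τ : ℝ => ((τ, u) : ℝ × E)) s := by fun_prop
      exact hco.eventually_mem (hD.mem_nhds hsu)
    have hev : (fun τ => Φ (τ - s, Φ (s, u))) =ᶠ[𝓝 s] fun τ => Φ (τ, u) := by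
      filter_upwards [h1, h2] with τ hτ1 hτ2
      have h3 : (s + (τ - s), u) ∈ D := by
        rw [show s + (τ - s) = τ by ring]; exact hτ2
      have h4 := hcomp s (τ - s) u hsu hτ1 h3
      rw [h4, show s + (τ - s) = τ by ring]
    exact hshift.congr_of_eventuallyEq hev.symm
  -- Fact 2: group law / extension of flow lines
  have fact2 : ∀ s τ u, (s, u) ∈ D → (s + τ, u) ∈ D →
      (τ, Φ (s, u)) ∈ D ∧ Φ (τ, Φ (s, u)) = Φ (s + τ, u) := by
    intro s τ u hsu hstu
    have hΦsu : Φ (s, u) ∈ U := hmaps _ hsu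
    have hI'open : IsOpen {r : ℝ | (s + r, u) ∈ D} :=
      IsOpen.preimage (by fun_prop) hD
    have hI'conn : Set.OrdConnected {r : ℝ | (s + r, u) ∈ D} := by
      constructor
      intro a ha b hb r hr
      exact (hconn u).out ha hb ⟨by linarith [hr.1], by linarith [hr.2]⟩
    have h0I : (0 : ℝ) ∈ {r : ℝ | (s + r, u) ∈ D} := by simpa using hsu
    have hγ' : ∀ r ∈ {r : ℝ | (s + r, u) ∈ D},
        HasDerivAt (fun r => Φ (s + r, u)) (β x (Φ (s + r, u))) r := by
      intro r hr
      have h1 := fact1 (s + r) u hr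
      have hc : HasDerivAt (fun r' : ℝ => s + r') 1 r := by
        simpa using (hasDerivAt_id r).const_add s
      simpa [Function.comp_def] using HasDerivAt.scomp_of_eq (hg := h1) (hh := hc) (hy := rfl)
    obtain ⟨hsub, heq⟩ := hmax (Φ (s, u)) hΦsu {r : ℝ | (s + r, u) ∈ D}
      (fun r => Φ (s + r, u)) hI'open hI'conn h0I (by simp)
      (fun r hr => hmaps _ hr) hγ'
    have hτI : τ ∈ {r : ℝ | (s + r, u) ∈ D} := hstu
    exact ⟨hsub hτI, (heq hτI).symm⟩
  intro y t m htm
  have hmU : m ∈ U := hDU _ htm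
  have h0J : ((0 : ℝ), m) ∈ D := hzero m hmU
  set p : ℝ → E := fun s => Φ (s, m) with hp
  have hpU : ∀ s, (s, m) ∈ D → p s ∈ U := fun s hs => hmaps _ hs
  have hneg : ∀ s, (s, m) ∈ D → (-s, p s) ∈ D ∧ Φ (-s, p s) = m := by
    intro s hs
    have hmem : (s + -s, m) ∈ D := by rw [show s + -s = (0 : ℝ) by ring]; exact h0J
    obtain ⟨h1, h2⟩ := fact2 s (-s) m hs hmem
    refine ⟨h1, ?_⟩
    rw [h2, show s + -s = (0 : ℝ) by ring, hid m hmU]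
  set Bmap : ℝ → (E →L[ℝ] E) := fun s => fderiv ℝ (fun u => Φ (s, u)) m with hBmap
  set Amap : ℝ → (E →L[ℝ] E) := fun s => fderiv ℝ (fun u => Φ (-s, u)) (p s) with hAmap
  have hpart : ∀ (σ : ℝ) (v : E), (σ, v) ∈ D → HasFDerivAt (fun u => Φ (σ, u))
      ((fderiv ℝ Φ (σ, v)).comp (ContinuousLinearMap.inr ℝ ℝ E)) v := by
    intro σ v hv
    have hΦd : HasFDerivAt Φ (fderiv ℝ Φ (σ, v)) (σ, v) :=
      ((hΦat _ hv).differentiableAt two_ne_zero).hasFDerivAt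
    have hin : HasFDerivAt (fun u : E => ((σ, u) : ℝ × E)) (ContinuousLinearMap.inr ℝ ℝ E) v :=
      (hasFDerivAt_const σ v).prodMk (hasFDerivAt_id v)
    exact hΦd.comp v hin
  have hB : ∀ s, (s, m) ∈ D → HasFDerivAt (fun u => Φ (s, u)) (Bmap s) m := by
    intro s hs
    have h1 := hpart s m hs
    have h2 : Bmap s = (fderiv ℝ Φ (s, m)).comp (ContinuousLinearMap.inr ℝ ℝ E) := h1.fderiv
    rw [h2]; exact h1
  have hA : ∀ s, (s, m) ∈ D → HasFDerivAt (fun u => Φ (-s, u)) (Amap s) (p s) := by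
    intro s hs
    have h1 := hpart (-s) (p s) (hneg s hs).1
    have h2 : Amap s = (fderiv ℝ Φ (-s, p s)).comp (ContinuousLinearMap.inr ℝ ℝ E) := h1.fderiv
    rw [h2]; exact h1
  have hAB : ∀ s, (s, m) ∈ D → (Amap s).comp (Bmap s) = ContinuousLinearMap.id ℝ E := by
    intro s hs
    have hcompD : HasFDerivAt (fun u => Φ (-s, Φ (s, u))) ((Amap s).comp (Bmap s)) m :=
      HasFDerivAt.comp (g := fun u => Φ (-s, u)) m (hA s hs) (hB s hs)
    have hev : (fun u => Φ (-s, Φ (s, u))) =ᶠ[𝓝 m] id := by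
      have h2 : ∀ᶠ u in 𝓝 m, (s, u) ∈ D := by
        have hco : ContinuousAt (fun u : E => ((s, u) : ℝ × E)) m := by fun_prop
        exact hco.eventually_mem (hD.mem_nhds hs)
      filter_upwards [h2] with u hu
      have huU : u ∈ U := hDU _ hu
      have h3 : (s + -s, u) ∈ D := by
        rw [show s + -s = (0 : ℝ) by ring]; exact hzero u huU
      have h4 := (fact2 s (-s) u hu h3).2
      simp only [id]
      rw [h4, show s + -s = (0 : ℝ) by ring, hid u huU]
    exact ((hcompD.congr_of_eventuallyEq hev.symm).unique (hasFDerivAt_id m))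
  have hBA : ∀ s, (s, m) ∈ D → (Bmap s).comp (Amap s) = ContinuousLinearMap.id ℝ E := by
    intro s hs
    obtain ⟨hnegD, hnegeq⟩ := hneg s hs
    have houter : HasFDerivAt (fun u => Φ (s, u)) (Bmap s) (Φ (-s, p s)) := by
      rw [hnegeq]; exact hB s hs
    have hcompD : HasFDerivAt (fun v => Φ (s, Φ (-s, v))) ((Bmap s).comp (Amap s)) (p s) :=
      HasFDerivAt.comp (g := fun u => Φ (s, u)) (p s) houter (hA s hs)
    have hev : (fun v => Φ (s, Φ (-s, v))) =ᶠ[𝓝 (p s)] id := by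
      have h2 : ∀ᶠ v in 𝓝 (p s), (-s, v) ∈ D := by
        have hco : ContinuousAt (fun v : E => ((-s, v) : ℝ × E)) (p s) := by fun_prop
        exact hco.eventually_mem (hD.mem_nhds hnegD)
      filter_upwards [h2] with v hv
      have hvU : v ∈ U := hDU _ hv
      have h3 : (-s + s, v) ∈ D := by
        rw [show -s + s = (0 : ℝ) by ring]; exact hzero v hvU
      have h4 := (fact2 (-s) s v hv h3).2
      simp only [id]
      rw [h4, show -s + s = (0 : ℝ) by ring, hid v hvU]
    exact ((hcompD.congr_of_eventuallyEq hev.symm).unique (hasFDerivAt_id (p s)))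
  -- derivative of the flow line
  have hpderiv : ∀ s, (s, m) ∈ D → HasDerivAt p (β x (p s)) s := fun s hs => fact1 s m hs
  -- variational equation
  have hBderiv : ∀ s, (s, m) ∈ D →
      HasDerivAt Bmap ((fderiv ℝ (β x) (p s)).comp (Bmap s)) s := by
    intro s hs
    have hpsU : p s ∈ U := hpU s hs
    have hF2 : ContDiffOn ℝ 1 (fderiv ℝ Φ) D := hΦ2.fderiv_of_isOpen hD (by norm_num)
    have hSd : HasFDerivAt (fderiv ℝ Φ) (fderiv ℝ (fderiv ℝ Φ) (s, m)) (s, m) :=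
      ((hF2.contDiffAt (hD.mem_nhds hs)).differentiableAt one_ne_zero).hasFDerivAt
    set S := fderiv ℝ (fderiv ℝ Φ) (s, m) with hSdef
    have hfR : ∀ᶠ q in 𝓝 (s, m), HasFDerivAt Φ (fderiv ℝ Φ q) q := by
      filter_upwards [hD.mem_nhds hs] with q hq
      exact ((hΦat q hq).differentiableAt two_ne_zero).hasFDerivAt
    have hsymm : ∀ v w : ℝ × E, S v w = S w v :=
      fun v w => second_derivative_symmetric_of_eventually hfR hSd v w
    have hcurve : HasDerivAt (fun σ : ℝ => ((σ, m) : ℝ × E)) (1, 0) s :=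
      (hasDerivAt_id s).prodMk (hasDerivAt_const s m)
    have hF2s : HasDerivAt (fun σ => fderiv ℝ Φ (σ, m)) (S (1, 0)) s :=
      hSd.comp_hasDerivAt s hcurve
    have hevD : ∀ᶠ σ in 𝓝 s, (σ, m) ∈ D := by
      have hco : ContinuousAt (fun σ : ℝ => ((σ, m) : ℝ × E)) s := by fun_prop
      exact hco.eventually_mem (hD.mem_nhds hs)
    have hevB : (fun σ => (fderiv ℝ Φ (σ, m)).comp (ContinuousLinearMap.inr ℝ ℝ E))
        =ᶠ[𝓝 s] Bmap := by
      filter_upwards [hevD] with σ hσ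
      exact ((hpart σ m hσ).fderiv).symm
    have hBd : HasDerivAt Bmap ((S (1, 0)).comp (ContinuousLinearMap.inr ℝ ℝ E)) s := by
      have hconst : HasDerivAt (fun _ : ℝ => ContinuousLinearMap.inr ℝ ℝ E) 0 s :=
        hasDerivAt_const _ _
      have h1 : HasDerivAt (fun σ => (fderiv ℝ Φ (σ, m)).comp (ContinuousLinearMap.inr ℝ ℝ E))
          ((S (1, 0)).comp (ContinuousLinearMap.inr ℝ ℝ E)) s := by
        simpa using hF2s.clm_comp hconst
      exact h1.congr_of_eventuallyEq hevB.symm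
    have hΦd : HasFDerivAt Φ (fderiv ℝ Φ (s, m)) (s, m) :=
      ((hΦat _ hs).differentiableAt two_ne_zero).hasFDerivAt
    have happ : HasFDerivAt (fun q : ℝ × E => fderiv ℝ Φ q ((1 : ℝ), (0 : E)))
        ((ContinuousLinearMap.apply ℝ E (((1 : ℝ), (0 : E)) : ℝ × E)).comp S) (s, m) :=
      (ContinuousLinearMap.apply ℝ E (((1 : ℝ), (0 : E)) : ℝ × E)).hasFDerivAt.comp (s, m) hSd
    have hev1 : (fun q : ℝ × E => fderiv ℝ Φ q ((1 : ℝ), (0 : E)))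
        =ᶠ[𝓝 (s, m)] (fun q => β x (Φ q)) := by
      filter_upwards [hD.mem_nhds hs] with q hq
      have hΦdq : HasFDerivAt Φ (fderiv ℝ Φ q) (q.1, q.2) := by
        rw [Prod.mk.eta]
        exact ((hΦat q hq).differentiableAt two_ne_zero).hasFDerivAt
      have hin : HasDerivAt (fun τ : ℝ => ((τ, q.2) : ℝ × E)) (1, 0) q.1 :=
        (hasDerivAt_id _).prodMk (hasDerivAt_const _ _)
      have hd1 : HasDerivAt (fun τ => Φ (τ, q.2)) (fderiv ℝ Φ q ((1 : ℝ), (0 : E))) q.1 :=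
        hΦdq.comp_hasDerivAt q.1 hin
      have hd2 := fact1 q.1 q.2 (by rwa [Prod.mk.eta])
      have := hd1.unique hd2
      rw [this, Prod.mk.eta]
    have hXd : HasFDerivAt (β x) (fderiv ℝ (β x) (p s)) (p s) :=
      ((hXsm x (p s) hpsU).differentiableAt two_ne_zero).hasFDerivAt
    have hXc : HasFDerivAt (fun q : ℝ × E => β x (Φ q))
        ((fderiv ℝ (β x) (p s)).comp (fderiv ℝ Φ (s, m))) (s, m) :=
      hXd.comp (s, m) hΦd
    have hfinal : (ContinuousLinearMap.apply ℝ E (((1 : ℝ), (0 : E)) : ℝ × E)).comp S =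
        (fderiv ℝ (β x) (p s)).comp (fderiv ℝ Φ (s, m)) :=
      (happ.congr_of_eventuallyEq hev1.symm).unique hXc
    have heq : (S (1, 0)).comp (ContinuousLinearMap.inr ℝ ℝ E) =
        (fderiv ℝ (β x) (p s)).comp (Bmap s) := by
      ext u
      have h1 : S ((1 : ℝ), (0 : E)) ((0 : ℝ), u) = S ((0 : ℝ), u) ((1 : ℝ), (0 : E)) :=
        hsymm _ _
      have h2 : S ((0 : ℝ), u) ((1 : ℝ), (0 : E)) =
          ((ContinuousLinearMap.apply ℝ E (((1 : ℝ), (0 : E)) : ℝ × E)).comp S) ((0 : ℝ), u) :=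
        rfl
      have h3 : Bmap s u = fderiv ℝ Φ (s, m) ((0 : ℝ), u) := by
        have h4 := (hpart s m hs).fderiv
        rw [show Bmap s = fderiv ℝ (fun u => Φ (s, u)) m from rfl, h4]
        rfl
      simp only [ContinuousLinearMap.comp_apply, ContinuousLinearMap.inr_apply]
      rw [h1, h2, hfinal, h3]
      rfl
    rw [← heq]
    exact hBd
  -- derivative of the inverse
  have hAderiv : ∀ s, (s, m) ∈ D →
      HasDerivAt Amap (-((Amap s).comp (fderiv ℝ (β x) (p s)))) s := by
    intro s hs
    have hunit : ∀ σ, (σ, m) ∈ D → Ring.inverse (Bmap σ) = Amap σ := by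
      intro σ hσ
      exact Ring.inverse_unit (Units.mk (Bmap σ) (Amap σ)
        (by rw [ContinuousLinearMap.mul_def, ContinuousLinearMap.one_def]; exact hBA σ hσ)
        (by rw [ContinuousLinearMap.mul_def, ContinuousLinearMap.one_def]; exact hAB σ hσ))
    set u : (E →L[ℝ] E)ˣ := Units.mk (Bmap s) (Amap s)
      (by rw [ContinuousLinearMap.mul_def, ContinuousLinearMap.one_def]; exact hBA s hs)
      (by rw [ContinuousLinearMap.mul_def, ContinuousLinearMap.one_def]; exact hAB s hs)
      with hu
    have hinv : HasFDerivAt (Ring.inverse : (E →L[ℝ] E) → (E →L[ℝ] E))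
        (-(ContinuousLinearMap.mulLeftRight ℝ (E →L[ℝ] E) (Amap s) (Amap s))) (Bmap s) := by
      have h1 := hasFDerivAt_ringInverse (𝕜 := ℝ) u
      simpa [hu] using h1
    have hcompd : HasDerivAt (fun σ => Ring.inverse (Bmap σ))
        ((-(ContinuousLinearMap.mulLeftRight ℝ (E →L[ℝ] E) (Amap s) (Amap s)))
          ((fderiv ℝ (β x) (p s)).comp (Bmap s))) s :=
      hinv.comp_hasDerivAt s (hBderiv s hs)
    have hevD : ∀ᶠ σ in 𝓝 s, (σ, m) ∈ D := by
      have hco : ContinuousAt (fun σ : ℝ => ((σ, m) : ℝ × E)) s := by fun_prop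
      exact hco.eventually_mem (hD.mem_nhds hs)
    have hevA : (fun σ => Ring.inverse (Bmap σ)) =ᶠ[𝓝 s] Amap := by
      filter_upwards [hevD] with σ hσ
      exact hunit σ hσ
    have hAd := hcompd.congr_of_eventuallyEq hevA.symm
    have hval : (-(ContinuousLinearMap.mulLeftRight ℝ (E →L[ℝ] E) (Amap s) (Amap s)))
        ((fderiv ℝ (β x) (p s)).comp (Bmap s)) = -((Amap s).comp (fderiv ℝ (β x) (p s))) := by
      have hBAv : ∀ v, Bmap s (Amap s v) = v := fun v => by
        have := ContinuousLinearMap.ext_iff.mp (hBA s hs) v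
        simpa using this
      ext v
      simp only [ContinuousLinearMap.neg_apply, ContinuousLinearMap.mulLeftRight_apply,
        ContinuousLinearMap.mul_apply, ContinuousLinearMap.comp_apply]
      rw [hBAv]
    rw [← hval]
    exact hAd
  set c : ℝ → 𝔤 := fun s => NormedSpace.exp ((t - s) • adx) y with hc
  -- derivative of the 𝔤-valued curve
  have hcderiv : ∀ s : ℝ, HasDerivAt c (-(adx (c s))) s := by
    intro s
    have h1 : HasDerivAt (fun r : ℝ => NormedSpace.exp (r • adx))
        (NormedSpace.exp ((t - s) • adx) * adx) (t - s) := hasDerivAt_exp_smul_const adx (t - s)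
    have hin : HasDerivAt (fun s : ℝ => t - s) (-1) s := by
      simpa using (hasDerivAt_id s).const_sub t
    have h2 : HasDerivAt (fun s : ℝ => NormedSpace.exp ((t - s) • adx))
        ((-1 : ℝ) • (NormedSpace.exp ((t - s) • adx) * adx)) s := by
      simpa [Function.comp_def] using HasDerivAt.scomp_of_eq (hg := h1) (hh := hin) (hy := rfl)
    have h3 : HasDerivAt c
        (((-1 : ℝ) • (NormedSpace.exp ((t - s) • adx) * adx)) y + NormedSpace.exp ((t - s) • adx) 0) s :=
      h2.clm_apply (hasDerivAt_const s y)
    have hcomm : adx * NormedSpace.exp ((t - s) • adx) =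
        NormedSpace.exp ((t - s) • adx) * adx :=
      (by
        have hc0 : Commute adx ((t - s) • adx) := by
          show adx * ((t - s) • adx) = ((t - s) • adx) * adx
          ext v; simp [ContinuousLinearMap.mul_apply]
        exact (hc0.exp_right).eq)
    have hval : ((-1 : ℝ) • (NormedSpace.exp ((t - s) • adx) * adx)) y +
        NormedSpace.exp ((t - s) • adx) 0 = -(adx (c s)) := by
      rw [← hcomm]
      simp only [map_zero, add_zero, ContinuousLinearMap.smul_apply,
        ContinuousLinearMap.mul_apply, neg_one_smul]
      rfl
    rw [← hval]
    exact h3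
  -- derivative of s ↦ β (c s) (p s)
  have hwderiv : ∀ s, (s, m) ∈ D →
      HasDerivAt (fun s => β (c s) (p s))
        (β (-(adx (c s))) (p s) + fderiv ℝ (β (c s)) (p s) (β x (p s))) s := by
    intro s hs
    have hpsU : p s ∈ U := hpU s hs
    have hF : HasFDerivAt (fun q : 𝔤 × E => β q.1 q.2)
        (fderiv ℝ (fun q : 𝔤 × E => β q.1 q.2) (c s, p s)) (c s, p s) :=
      ((hβ2.contDiffAt (hUopen.mem_nhds ⟨trivial, hpsU⟩)).differentiableAt two_ne_zero).hasFDerivAt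
    set DF := fderiv ℝ (fun q : 𝔤 × E => β q.1 q.2) (c s, p s) with hDF
    have hcurve : HasDerivAt (fun s => ((c s, p s) : 𝔤 × E)) (-(adx (c s)), β x (p s)) s :=
      (hcderiv s).prodMk (hpderiv s hs)
    have hcompd : HasDerivAt (fun s => β (c s) (p s)) (DF (-(adx (c s)), β x (p s))) s :=
      by have := hF.comp_hasDerivAt s hcurve; exact this
    have hsplit : DF (-(adx (c s)), β x (p s)) =
        DF (-(adx (c s)), 0) + DF (0, β x (p s)) := by
      rw [← map_add]
      congr 1
      simp
    have h1 : DF (-(adx (c s)), (0 : E)) = β (-(adx (c s))) (p s) := by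
      have hin : HasFDerivAt (fun z : 𝔤 => ((z, p s) : 𝔤 × E))
          (ContinuousLinearMap.inl ℝ 𝔤 E) (c s) :=
        (hasFDerivAt_id (c s)).prodMk (hasFDerivAt_const (p s) (c s))
      have hlin : HasFDerivAt (fun z : 𝔤 => β z (p s))
          (DF.comp (ContinuousLinearMap.inl ℝ 𝔤 E)) (c s) := by
        have := hF.comp (c s) hin; exact this
      have h2 := linear_eq_hasFDerivAt (f := fun z : 𝔤 => β z (p s))
        (fun a b => by show β (a + b) (p s) = β a (p s) + β b (p s); rw [map_add]; rfl)
        (fun r a => by show β (r • a) (p s) = r • β a (p s); rw [map_smul]; rfl)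
        hlin (-(adx (c s)))
      rw [h2]
      rfl
    have h2 : DF ((0 : 𝔤), β x (p s)) = fderiv ℝ (β (c s)) (p s) (β x (p s)) := by
      have hin : HasFDerivAt (fun u : E => ((c s, u) : 𝔤 × E))
          (ContinuousLinearMap.inr ℝ 𝔤 E) (p s) :=
        (hasFDerivAt_const (c s) (p s)).prodMk (hasFDerivAt_id (p s))
      have hcomp2 : HasFDerivAt (fun u : E => β (c s) u)
          (DF.comp (ContinuousLinearMap.inr ℝ 𝔤 E)) (p s) := hF.comp (p s) hin
      rw [hcomp2.fderiv]
      rfl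
    rw [show β (-(adx (c s))) (p s) + fderiv ℝ (β (c s)) (p s) (β x (p s)) =
      DF (-(adx (c s)), β x (p s)) by rw [hsplit, h1, h2]]
    exact hcompd
  set H : ℝ → E := fun s => Amap s (β (c s) (p s)) with hH
  have hHderiv : ∀ s, (s, m) ∈ D → HasDerivAt H 0 s := by
    intro s hs
    have hpsU : p s ∈ U := hpU s hs
    have h1 := (hAderiv s hs).clm_apply (hwderiv s hs)
    have hbr := hβhom x (c s) (p s) hpsU
    rw [fderivWithin_of_isOpen hU hpsU, fderivWithin_of_isOpen hU hpsU] at hbr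
    have hmn : β (-(adx (c s))) (p s) = -(β (adx (c s)) (p s)) := by
      rw [map_neg]; rfl
    have hvz : (-((Amap s).comp (fderiv ℝ (β x) (p s)))) (β (c s) (p s)) +
        Amap s (β (-(adx (c s))) (p s) + fderiv ℝ (β (c s)) (p s) (β x (p s))) = 0 := by
      have expand : (-((Amap s).comp (fderiv ℝ (β x) (p s)))) (β (c s) (p s)) +
          Amap s (β (-(adx (c s))) (p s) + fderiv ℝ (β (c s)) (p s) (β x (p s))) =
          Amap s (β (-(adx (c s))) (p s) + fderiv ℝ (β (c s)) (p s) (β x (p s))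
            - fderiv ℝ (β x) (p s) (β (c s) (p s))) := by
        rw [map_sub]
        simp only [ContinuousLinearMap.neg_apply, ContinuousLinearMap.comp_apply]
        abel
      rw [expand, hmn, hadx, hbr]
      rw [show -(fderiv ℝ (β (c s)) (p s) (β x (p s)) - fderiv ℝ (β x) (p s) (β (c s) (p s))) +
          fderiv ℝ (β (c s)) (p s) (β x (p s)) - fderiv ℝ (β x) (p s) (β (c s) (p s)) = 0 by abel,
        map_zero]
    rw [← hvz]
    exact h1
  have hJconv : Convex ℝ {s : ℝ | (s, m) ∈ D} := (hconn m).convex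
  have hconst : H t = H 0 := by
    have hb := Convex.norm_image_sub_le_of_norm_hasDerivWithin_le
      (f' := fun _ => (0 : E)) (C := 0)
      (fun s hs => (hHderiv s hs).hasDerivWithinAt) (fun s _ => by simp) hJconv h0J htm
    have h2 : ‖H t - H 0‖ ≤ 0 := by simpa using hb
    have h3 : H t - H 0 = 0 := by
      simpa using le_antisymm h2 (norm_nonneg _)
    exact sub_eq_zero.mp h3
  have hA0 : Amap 0 = ContinuousLinearMap.id ℝ E := by
    have h1 : HasFDerivAt (fun u => Φ (-(0 : ℝ), u)) (Amap 0) (p 0) := hA 0 h0J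
    have hev : (fun u => Φ (-(0 : ℝ), u)) =ᶠ[𝓝 (p 0)] id := by
      filter_upwards [hU.mem_nhds (hpU 0 h0J)] with u hu
      simp only [neg_zero, id]
      exact hid u hu
    exact ((h1.congr_of_eventuallyEq hev.symm).unique (hasFDerivAt_id (p 0)))
  have hsetopen : IsOpen {u : E | (-t, u) ∈ D} := IsOpen.preimage (by fun_prop) hD
  have hmemset : Φ (t, m) ∈ {u : E | (-t, u) ∈ D} := (hneg t htm).1
  constructor
  · exact (hA t htm).differentiableAt.differentiableWithinAt
  · rw [fderivWithin_of_isOpen hsetopen hmemset]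
    have hgoal : fderiv ℝ (fun u => Φ (-t, u)) (Φ (t, m)) = Amap t := rfl
    rw [hgoal]
    have h1 : H t = Amap t (β y (p t)) := by
      have : c t = y := by
        rw [hc]
        simp only [sub_self, zero_smul, NormedSpace.exp_zero, ContinuousLinearMap.one_apply]
      simp only [hH, this]
    have h2 : H 0 = β (NormedSpace.exp (t • adx) y) m := by
      have hct : c 0 = NormedSpace.exp (t • adx) y := by rw [hc]; simp
      have hpt : p 0 = m := by rw [hp]; exact hid m hmU
      simp only [hH, hct, hpt, hA0, ContinuousLinearMap.id_apply]
    calc β (NormedSpace.exp (t • adx) y) m = H 0 := h2.symm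
      _ = H t := hconst.symm
      _ = Amap t (β y (p t)) := h1
end

section
/- There do not exist ε > 0 and a function u : (−ε, ε) × (0,1) → ℝ, (jointly) differentiable at every point of its domain, such that ∂u/∂t (t,x) = ∂u/∂x (t,x) for all (t,x) ∈ (−ε, ε) × (0,1) and u(0,x) = 1/(x − x²) for all x ∈ (0,1). -/
/-- There is no differentiable solution `u` of the transport equation `∂u/∂t = ∂u/∂x` on
`(-ε, ε) × (0, 1)` with initial value `u(0, x) = 1/(x - x²)`; i.e. the linear ODE
`γ' = D γ` with `D f = f'` on `C^∞((0, 1))` has no solution through `v₀(x) = 1/(x - x²)`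
on any interval around `0`. -/
theorem no_solution_transport_equation :
    ¬ ∃ (ε : ℝ) (u : ℝ × ℝ → ℝ), 0 < ε ∧
      (∀ p ∈ (Set.Ioo (-ε) ε) ×ˢ (Set.Ioo (0 : ℝ) 1), DifferentiableAt ℝ u p) ∧
      (∀ p ∈ (Set.Ioo (-ε) ε) ×ˢ (Set.Ioo (0 : ℝ) 1),
        fderiv ℝ u p (1, 0) = fderiv ℝ u p (0, 1)) ∧
      (∀ x ∈ Set.Ioo (0 : ℝ) 1, u (0, x) = 1 / (x - x ^ 2)) := by
  rintro ⟨ε, u, hε, hdiff, heq, hinit⟩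
  set δ : ℝ := min ε 1 / 2 with hδdef
  have hδpos : 0 < δ := by
    have : 0 < min ε 1 := lt_min hε one_pos
    positivity
  have hδε : δ < ε := by
    have h1 : min ε 1 ≤ ε := min_le_left _ _
    have : min ε 1 / 2 < min ε 1 := by
      have : 0 < min ε 1 := lt_min hε one_pos
      linarith
    linarith
  have hδ1 : δ < 1 := by
    have h1 : min ε 1 ≤ 1 := min_le_right _ _
    have : 0 < min ε 1 := lt_min hε one_pos
    rw [hδdef]; linarith
  -- membership of points on characteristics
  have hmem : ∀ s : ℝ, 0 < s → s < 1 - δ → ∀ r ∈ Set.Icc (0:ℝ) δ,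
      (r, 1 - s - r) ∈ (Set.Ioo (-ε) ε) ×ˢ (Set.Ioo (0 : ℝ) 1) := by
    intro s hs0 hs1 r hr
    simp only [Set.mem_prod, Set.mem_Ioo]
    refine ⟨⟨by linarith [hr.1], lt_of_le_of_lt hr.2 hδε⟩, by linarith [hr.2], by linarith [hr.1]⟩
  -- u is constant along characteristics
  have key : ∀ s : ℝ, 0 < s → s < 1 - δ → u (δ, 1 - s - δ) = 1 / (s * (1 - s)) := by
    intro s hs0 hs1
    have hg : ∀ r ∈ Set.Ico (0:ℝ) δ,
        HasDerivWithinAt (fun r : ℝ => u (r, 1 - s - r)) 0 (Set.Ici r) r := by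
      intro r hr
      have hm := hmem s hs0 hs1 r ⟨hr.1, hr.2.le⟩
      have hd := (hdiff _ hm).hasFDerivAt
      have hc : HasDerivAt (fun r : ℝ => (r, 1 - s - r)) ((1 : ℝ), (-1 : ℝ)) r := by
        exact HasDerivAt.prodMk (hasDerivAt_id r) ((hasDerivAt_id r).const_sub (1 - s))
      have hcomp := hd.comp_hasDerivAt r hc
      have hz : fderiv ℝ u (r, 1 - s - r) ((1 : ℝ), (-1 : ℝ)) = 0 := by
        have h12 : ((1 : ℝ), (-1 : ℝ)) = ((1 : ℝ), (0 : ℝ)) - ((0 : ℝ), (1 : ℝ)) := by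
          simp [Prod.ext_iff]
        rw [h12, map_sub, heq _ hm, sub_self]
      rw [hz] at hcomp
      exact hcomp.hasDerivWithinAt
    have hcont : ContinuousOn (fun r : ℝ => u (r, 1 - s - r)) (Set.Icc 0 δ) := by
      intro r hr
      have hm := hmem s hs0 hs1 r hr
      have : ContinuousAt (fun r : ℝ => u (r, 1 - s - r)) r := by
        show ContinuousAt (u ∘ fun r : ℝ => (r, 1 - s - r)) r
        exact ContinuousAt.comp (hdiff _ hm).continuousAt
          (continuous_id.prodMk (continuous_const.sub continuous_id)).continuousAt
      exact this.continuousWithinAt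
    have hconst := constant_of_has_deriv_right_zero hcont hg δ
      (Set.right_mem_Icc.mpr hδpos.le)
    have h0 : u (0, 1 - s) = 1 / ((1 - s) - (1 - s) ^ 2) :=
      hinit (1 - s) ⟨by linarith, by linarith⟩
    have : u (δ, 1 - s - δ) = u (0, 1 - s - 0) := hconst
    rw [sub_zero] at this
    rw [this, h0]
    congr 1
    ring
  -- continuity at the boundary point (δ, 1-δ)
  have hpm : ((δ, 1 - δ) : ℝ × ℝ) ∈ (Set.Ioo (-ε) ε) ×ˢ (Set.Ioo (0 : ℝ) 1) := by
    simp only [Set.mem_prod, Set.mem_Ioo]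
    refine ⟨⟨by linarith, hδε⟩, by linarith, by linarith⟩
  have hcontp : ContinuousAt u (δ, 1 - δ) := (hdiff _ hpm).continuousAt
  -- the limit along the characteristic is finite…
  have hlim : Filter.Tendsto (fun s : ℝ => u (δ, 1 - s - δ)) (nhdsWithin 0 (Set.Ioi 0))
      (nhds (u (δ, 1 - δ))) := by
    have h1 : Filter.Tendsto (fun s : ℝ => ((δ, 1 - s - δ) : ℝ × ℝ))
        (nhdsWithin 0 (Set.Ioi 0)) (nhds (δ, 1 - δ)) := by
      have : Filter.Tendsto (fun s : ℝ => ((δ, 1 - s - δ) : ℝ × ℝ)) (nhds 0)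
          (nhds (δ, 1 - 0 - δ)) := by
        apply Continuous.tendsto
        exact continuous_const.prodMk ((continuous_const.sub continuous_id).sub continuous_const)
      rw [show (1 : ℝ) - 0 - δ = 1 - δ by ring] at this
      exact this.mono_left nhdsWithin_le_nhds
    exact hcontp.tendsto.comp h1
  -- …but it also goes to infinity
  have hblow : Filter.Tendsto (fun s : ℝ => u (δ, 1 - s - δ)) (nhdsWithin 0 (Set.Ioi 0))
      Filter.atTop := by
    have hev : (fun s : ℝ => 1 / (s * (1 - s))) =ᶠ[nhdsWithin 0 (Set.Ioi 0)]
        (fun s : ℝ => u (δ, 1 - s - δ)) := by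
      filter_upwards [Ioo_mem_nhdsGT_of_mem
        (show (0:ℝ) ∈ Set.Ico (0:ℝ) (1 - δ) from Set.left_mem_Ico.mpr (by linarith))] with s hs
      exact (key s hs.1 hs.2).symm
    refine Filter.Tendsto.congr' hev ?_
    have h2 : Filter.Tendsto (fun s : ℝ => s * (1 - s)) (nhdsWithin 0 (Set.Ioi 0))
        (nhdsWithin 0 (Set.Ioi 0)) := by
      apply tendsto_nhdsWithin_of_tendsto_nhds_of_eventually_within
      · have : Filter.Tendsto (fun s : ℝ => s * (1 - s)) (nhds 0) (nhds (0 * (1 - 0))) :=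
          (continuous_id.mul (continuous_const.sub continuous_id)).tendsto 0
        simpa using this.mono_left nhdsWithin_le_nhds
      · filter_upwards [Ioo_mem_nhdsGT_of_mem (Set.left_mem_Ico.mpr one_pos)] with s hs
        exact mul_pos hs.1 (by linarith [hs.2])
    have h3 : Filter.Tendsto (fun x : ℝ => 1 / x) (nhdsWithin 0 (Set.Ioi 0)) Filter.atTop := by
      simpa [one_div] using tendsto_inv_nhdsGT_zero
    exact h3.comp h2
  exact not_tendsto_atTop_of_tendsto_nhds hlim hblow
end
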